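/- arXiv:math/0604609 — 11 statements merged into one kernel-verified Lean document; each statement's English description precedes it below -/
import Mathlib

section
/- Let v_1,...,v_q be vectors in N^d lying in a hyperplane of R^d not containing the origin, let r_0 be the rank of the matrix with columns v_1,...,v_q, and let I be the monomial ideal of k[x_1,...,x_d] generated by x^{v_1},...,x^{v_q}. Then for every integer b ≥ r_0, the integral closure of I^b satisfies \overline{I^b} = I · \overline{I^{b-1}}. -/
open MvPolynomial Finset Function
open scoped Pointwise

/-!
A monomial `x^a` lies in `\overline{I^b}` iff `a ≥ ∑ tᵢ vᵢ` for rational weights `t ≥ 0` with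
`∑ tᵢ ≥ b`. Carathéodory's theorem lets us take the `vᵢ` with `tᵢ ≠ 0` affinely independent, hence
linearly independent since they lie on a hyperplane missing the origin; so there are at most
`r₀ ≤ b` of them, and one weight `tⱼ` is at least `1`. Then `x^a = x^(vⱼ) · x^(a - vⱼ)` with
`x^(a - vⱼ) ∈ \overline{I^(b-1)}`.
-/

/-- The integral closure of the `n`-th power of a monomial ideal `I`,
described as the monomial ideal generated by the monomials `x^a` such that
`x^(m•a) ∈ I^(n*m)` for some positive integer `m`. -/
noncomputable def intCl {k : Type*} [Field k] {σ : Type*}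
    (I : Ideal (MvPolynomial σ k)) (n : ℕ) : Ideal (MvPolynomial σ k) :=
  Ideal.span {p | ∃ a : σ →₀ ℕ, p = monomial a (1 : k) ∧
    ∃ m : ℕ, 0 < m ∧ monomial (m • a) (1 : k) ∈ I ^ (n * m)}

theorem AffineIndependent.linearIndependent_of_map_eq {𝕜 E F ι : Type*} [DivisionRing 𝕜]
    [AddCommGroup E] [Module 𝕜 E] [AddCommGroup F] [Module 𝕜 F]
    {z : ι → E} (hz : AffineIndependent 𝕜 z) (φ : E →ₗ[𝕜] F) {y : F} (hy : y ≠ 0)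
    (hφ : ∀ i, φ (z i) = y) : LinearIndependent 𝕜 z := by
  rw [linearIndependent_iff']
  intro s g hg
  refine hz.eq_zero_of_sum_eq_zero ?_ hg
  have : (∑ i ∈ s, g i) • y = 0 := by simpa [Finset.sum_smul, hφ] using congrArg φ hg
  exact (smul_eq_zero.mp this).resolve_right hy

theorem Fintype.sum_extend_zero_smul {R M κ ι : Type*} [Semiring R] [AddCommMonoid M]
    [Module R M] [Fintype κ] [Fintype ι] {e : κ → ι} (he : Injective e) (f : κ → R)
    (g : ι → M) : ∑ i, extend e f 0 i • g i = ∑ k, f k • g (e k) :=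
  (Fintype.sum_of_injective e he _ _
    (fun i hi => by simp [extend_apply' _ _ _ (by simpa using hi)])
    (fun k => by rw [he.extend_apply])).symm

/-- Carathéodory's theorem for cones over an affine hyperplane `φ = y`: apply the convex version
to the centre of mass of `t`; on the hyperplane, affine independence is linear independence. -/
theorem exists_nonneg_sum_smul_eq_linearIndepOn_support {𝕜 E F ι : Type*} [Field 𝕜]
    [LinearOrder 𝕜] [IsStrictOrderedRing 𝕜] [AddCommGroup E] [Module 𝕜 E] [AddCommGroup F]
    [Module 𝕜 F] [Fintype ι] {u : ι → E} (φ : E →ₗ[𝕜] F) {y : F} (hy : y ≠ 0)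
    (hφ : ∀ i, φ (u i) = y) {t : ι → 𝕜} (ht : 0 ≤ t) :
    ∃ μ : ι → 𝕜, 0 ≤ μ ∧ ∑ i, μ i = ∑ i, t i ∧ ∑ i, μ i • u i = ∑ i, t i • u i ∧
      LinearIndepOn 𝕜 u (support μ) := by
  classical
  set L := ∑ i, t i
  rcases (Finset.sum_nonneg fun i _ => ht i : 0 ≤ L).eq_or_lt with hL | hL
  · obtain rfl : t = 0 :=
      funext fun i => (Finset.sum_eq_zero_iff_of_nonneg fun i _ => ht i).1 hL.symm i (mem_univ i)
    exact ⟨0, le_rfl, rfl, rfl, by simp [linearIndepOn_empty]⟩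
  obtain ⟨κ, _, z, w, hzu, hz, hw0, hw1, hwz⟩ := eq_pos_convex_span_of_mem_convexHull
    (univ.centerMass_mem_convexHull (fun i _ => ht i) hL fun i _ => Set.mem_range_self (f := u) i)
  choose e he using fun k => hzu (Set.mem_range_self k)
  have hind : LinearIndependent 𝕜 (u ∘ e) := by
    rw [show u ∘ e = z from funext he]
    exact hz.linearIndependent_of_map_eq φ hy fun k => he k ▸ hφ (e k)
  have he_inj : Injective e := hind.injective.of_comp
  refine ⟨extend e (fun k => L * w k) 0, fun i => ?_, ?_, ?_, ?_⟩
  · by_cases hi : ∃ k, e k = i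
    · obtain ⟨k, rfl⟩ := hi
      simpa [he_inj.extend_apply] using mul_nonneg hL.le (hw0 k).le
    · simp [extend_apply' _ _ _ hi]
  · simpa [← mul_sum, hw1] using
      Fintype.sum_extend_zero_smul he_inj (fun k => L * w k) (1 : ι → 𝕜)
  · rw [Fintype.sum_extend_zero_smul he_inj]
    simp only [he, mul_smul, ← smul_sum, hwz, centerMass]
    exact smul_inv_smul₀ hL.ne' _
  · refine ((linearIndepOn_range_iff he_inj u).2 hind).mono fun i hi => ?_
    by_contra h
    exact hi (extend_apply' _ _ _ h)

theorem Matrix.card_le_rank_map_of_linearIndepOn {K L m n : Type*} [Field K] [Field L]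
    [Algebra K L] [Fintype m] [Fintype n] {A : Matrix m n K} {s : Finset n}
    (h : LinearIndepOn K A.col s) : s.card ≤ (A.map (algebraMap K L)).rank := by
  set B := (A.map (algebraMap K L)).submatrix id ((↑) : s → n)
  have hB : LinearIndependent L (Matrix.transpose B).row :=
    linearIndependent_algebraMap_comp_iff.2 h
  calc s.card = (Matrix.transpose B).rank := by rw [hB.rank_matrix, Fintype.card_coe]
    _ = B.rank := rank_transpose B
    _ ≤ _ := rank_submatrix_le _ _ _

theorem exists_pos_nat_mul_eq_natCast {ι : Type*} [Fintype ι] {t : ι → ℚ} (ht : 0 ≤ t) :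
    ∃ D : ℕ, 0 < D ∧ ∃ c : ι → ℕ, ∀ i, (c i : ℚ) = D * t i := by
  refine ⟨∏ i, (t i).den, Finset.prod_pos fun i _ => (t i).den_pos, ?_⟩
  have hdvd i : (t i).den ∣ ∏ j, (t j).den := Finset.dvd_prod_of_mem _ (mem_univ i)
  choose e he using hdvd
  refine ⟨fun i => (t i).num.toNat * e i, fun i => ?_⟩
  have hnum : (((t i).num.toNat : ℤ) : ℚ) = (t i).num := by
    rw [Int.toNat_of_nonneg (Rat.num_nonneg.mpr (ht i))]
  rw [he i]
  push_cast at hnum ⊢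
  rw [hnum, ← Rat.mul_den_eq_num]
  ring

theorem MvPolynomial.span_monomial_pow {R σ ι : Type*} [CommSemiring R] (v : ι → σ →₀ ℕ)
    (n : ℕ) : Ideal.span (Set.range fun i => monomial (v i) (1 : R)) ^ n =
      Ideal.span ((monomial · 1) ''
        ((fun c : ι →₀ ℕ => c.sum fun i e => e • v i) '' {c | c.degree = n})) := by
  rw [Ideal.span, Submodule.span_pow, ← Set.image_univ, Finsupp.image_pow_eq_finsuppProd_image]
  simp [Set.image_image, Finsupp.prod, Finsupp.sum, monomial_pow, ← monomial_sum_one]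

theorem MvPolynomial.monomial_mem_span_monomial_pow_iff {R σ ι : Type*} [CommSemiring R]
    [Nontrivial R] (v : ι → σ →₀ ℕ) (n : ℕ) (a : σ →₀ ℕ) :
    monomial a (1 : R) ∈ Ideal.span (Set.range fun i => monomial (v i) (1 : R)) ^ n ↔
      ∃ c : ι →₀ ℕ, c.degree = n ∧ (c.sum fun i e => e • v i) ≤ a := by
  classical
  simp [span_monomial_pow, mem_ideal_span_monomial_image, support_monomial]

theorem MvPolynomial.image_monomial_one_add {R σ : Type*} [CommSemiring R]
    (A B : Set (σ →₀ ℕ)) :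
    (monomial · (1 : R)) '' (A + B) = (monomial · 1) '' A * (monomial · 1) '' B := by
  simp_rw [← Set.image2_add, ← Set.image2_mul]
  exact Set.image_image2_distrib fun a b => by rw [monomial_mul, one_mul]

/-- `a` lies in `n • (conv {v i} + ℚ≥0^σ)`, the `n`-th dilate of the Newton polyhedron of the
ideal generated by the monomials `x^(v i)`. -/
def InNewtonPolyhedron {ι σ : Type*} [Fintype ι] (v : ι → σ →₀ ℕ) (n : ℕ) (a : σ →₀ ℕ) :
    Prop :=
  ∃ t : ι → ℚ, 0 ≤ t ∧ (n : ℚ) ≤ ∑ i, t i ∧ ∀ s, ∑ i, t i * v i s ≤ a s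

theorem exists_monomial_nsmul_mem_span_monomial_pow_iff {R σ ι : Type*} [CommSemiring R]
    [Nontrivial R] [Fintype ι] (v : ι → σ →₀ ℕ) (n : ℕ) (a : σ →₀ ℕ) :
    (∃ m, 0 < m ∧ monomial (m • a) (1 : R) ∈
        Ideal.span (Set.range fun i => monomial (v i) (1 : R)) ^ (n * m)) ↔
      InNewtonPolyhedron v n a := by
  have hsum (c : ι →₀ ℕ) (s : σ) : (c.sum fun i e => e • v i) s = ∑ i, c i * v i s := by
    simp [Finsupp.sum_fintype, Finsupp.finsetSum_apply]
  constructor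
  · rintro ⟨m, hm, hmem⟩
    obtain ⟨c, hc, hle⟩ := (monomial_mem_span_monomial_pow_iff v _ _).1 hmem
    have hm' : (0 : ℚ) < m := by exact_mod_cast hm
    refine ⟨fun i => c i / m, fun i => by positivity, ?_, fun s => ?_⟩
    · rw [← sum_div, le_div_iff₀ hm']
      exact_mod_cast (hc.symm.trans c.degree_eq_sum).le
    · have := hle s
      rw [hsum, Finsupp.smul_apply, smul_eq_mul] at this
      simp_rw [div_mul_eq_mul_div, ← sum_div, div_le_iff₀ hm', mul_comm _ (m : ℚ)]
      exact_mod_cast this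
  · rintro ⟨t, ht, hn, ha⟩
    obtain ⟨D, hD, c, hc⟩ := exists_pos_nat_mul_eq_natCast ht
    have hcD : n * D ≤ ∑ i, c i := by
      have : (n : ℚ) * D ≤ ∑ i, (c i : ℚ) := by
        simp_rw [hc, ← mul_sum]
        nlinarith [(Nat.cast_pos.mpr hD : (0 : ℚ) < D)]
      exact_mod_cast this
    refine ⟨D, hD, Ideal.pow_le_pow_right hcD <| (monomial_mem_span_monomial_pow_iff v _ _).2
      ⟨Finsupp.equivFunOnFinite.symm c, by simp [Finsupp.degree_eq_sum], fun s => ?_⟩⟩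
    rw [hsum, Finsupp.smul_apply, smul_eq_mul]
    have : ∑ i, (c i : ℚ) * v i s ≤ D * a s := by
      simp_rw [hc, mul_assoc, ← mul_sum]
      exact mul_le_mul_of_nonneg_left (ha s) (Nat.cast_nonneg D)
    exact_mod_cast this

theorem intCl_span_monomial {k σ ι : Type*} [Field k] [Fintype ι] (v : ι → σ →₀ ℕ) (n : ℕ) :
    intCl (Ideal.span (Set.range fun i => monomial (v i) (1 : k))) n =
      Ideal.span ((monomial · 1) '' {a | InNewtonPolyhedron v n a}) := by
  simp_rw [← exists_monomial_nsmul_mem_span_monomial_pow_iff (R := k)]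
  rw [intCl]
  congr 1
  ext p
  simp [eq_comm, and_comm]

theorem InNewtonPolyhedron.add {ι σ : Type*} [Fintype ι] {v : ι → σ →₀ ℕ} {n : ℕ}
    {a : σ →₀ ℕ} (h : InNewtonPolyhedron v n a) (i : ι) :
    InNewtonPolyhedron v (n + 1) (v i + a) := by
  classical
  obtain ⟨t, ht, hn, ha⟩ := h
  refine ⟨t + Pi.single i 1, add_nonneg ht (Pi.single_nonneg.2 zero_le_one), ?_, fun s => ?_⟩
  · simp [sum_add_distrib, hn]
  · have := ha s
    simp only [Pi.add_apply, Pi.single_apply, add_mul, ite_mul, one_mul, zero_mul,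
      sum_add_distrib, sum_ite_eq', mem_univ, ↓reduceIte, Finsupp.coe_add, Nat.cast_add]
    linarith

theorem card_le_rank_of_linearIndepOn {ι σ : Type*} [Fintype ι] [Fintype σ]
    {v : ι → σ →₀ ℕ} {S : Finset ι} (h : LinearIndepOn ℚ (fun i s => (v i s : ℚ)) S) :
    S.card ≤ (Matrix.of fun s i => (v i s : ℝ)).rank := by
  have : (Matrix.of fun s i => (v i s : ℝ)) =
      (Matrix.of fun s i => (v i s : ℚ)).map (algebraMap ℚ ℝ) := by
    ext; simp
  rw [this]
  exact Matrix.card_le_rank_map_of_linearIndepOn h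

theorem linearCombination_natCast_eq_one {ι σ : Type*} [Fintype σ] {v : ι → σ →₀ ℕ}
    {w : σ → ℝ} (hw : ∀ i, ∑ s, (v i s : ℝ) * w s = 1) (i : ι) :
    Fintype.linearCombination ℚ w (fun s => (v i s : ℚ)) = 1 := by
  simpa [Fintype.linearCombination_apply, Rat.smul_def] using hw i

theorem one_le_rank_of_sum_mul_eq_one {ι σ : Type*} [Fintype ι] [Fintype σ] [Nonempty ι]
    {v : ι → σ →₀ ℕ} {w : σ → ℝ} (hw : ∀ i, ∑ s, (v i s : ℝ) * w s = 1) :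
    1 ≤ (Matrix.of fun s i => (v i s : ℝ)).rank := by
  obtain ⟨i⟩ := ‹Nonempty ι›
  have hi : (fun s => (v i s : ℚ)) ≠ 0 := fun h0 => by
    simpa [h0] using linearCombination_natCast_eq_one hw i
  simpa using card_le_rank_of_linearIndepOn (S := {i}) (by simpa using hi)

theorem InNewtonPolyhedron.exists_sub {ι σ : Type*} [Fintype ι] [Fintype σ]
    {v : ι → σ →₀ ℕ} {w : σ → ℝ} (hw : ∀ i, ∑ s, (v i s : ℝ) * w s = 1) {b : ℕ} (hb₁ : 1 ≤ b)
    (hb : (Matrix.of fun s i => (v i s : ℝ)).rank ≤ b) {a : σ →₀ ℕ}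
    (h : InNewtonPolyhedron v b a) : ∃ i, v i ≤ a ∧ InNewtonPolyhedron v (b - 1) (a - v i) := by
  classical
  obtain ⟨t, ht, hbt, hta⟩ := h
  obtain ⟨μ, hμ, hμt, hμu, hind⟩ := exists_nonneg_sum_smul_eq_linearIndepOn_support
    (Fintype.linearCombination ℚ w) one_ne_zero (linearCombination_natCast_eq_one hw) ht
  have hμa (s : σ) : ∑ i, μ i * v i s ≤ a s := by
    have hμs := congrFun hμu s
    simp only [Finset.sum_apply, Pi.smul_apply, smul_eq_mul] at hμs
    exact hμs ▸ hta s
  set S := univ.filter (μ · ≠ 0)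
  have hSμ : ∑ i ∈ S, μ i = ∑ i, t i := by rw [sum_filter_ne_zero, hμt]
  have hcard : S.card ≤ b :=
    (card_le_rank_of_linearIndepOn (by simpa [S, Function.support] using hind)).trans hb
  have hS : S.Nonempty := nonempty_of_sum_ne_zero (f := μ) <| by
    rw [hSμ]; exact_mod_cast (lt_of_lt_of_le (by exact_mod_cast hb₁) hbt).ne'
  -- at most `b` nonzero weights add up to at least `b`
  obtain ⟨j, -, hj⟩ : ∃ j ∈ S, (1 : ℚ) ≤ μ j := exists_le_of_sum_le hS <| by
    rw [sum_const, nsmul_one, hSμ]; exact (Nat.cast_le.2 hcard).trans hbt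
  have hja : v j ≤ a := fun s => by
    have : (v j s : ℚ) ≤ a s := calc
      (v j s : ℚ) ≤ μ j * v j s := le_mul_of_one_le_left (Nat.cast_nonneg _) hj
      _ ≤ ∑ i, μ i * v i s :=
        single_le_sum (fun i _ => mul_nonneg (hμ i) (Nat.cast_nonneg _)) (mem_univ j)
      _ ≤ a s := hμa s
    exact_mod_cast this
  refine ⟨j, hja, μ - Pi.single j 1, fun i => ?_, ?_, fun s => ?_⟩
  · by_cases hij : i = j
    · subst hij; simpa using hj
    · simpa [hij] using hμ i
  · simp [sum_sub_distrib, hμt, Nat.cast_sub hb₁, hbt]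
  · have := hμa s
    simp only [Pi.sub_apply, Pi.single_apply, sub_mul, ite_mul, one_mul, zero_mul,
      sum_sub_distrib, sum_ite_eq', mem_univ, ↓reduceIte, Finsupp.coe_tsub, Nat.cast_sub (hja s)]
    linarith

theorem setOf_inNewtonPolyhedron_eq_add {ι σ : Type*} [Fintype ι] [Fintype σ]
    {v : ι → σ →₀ ℕ} {w : σ → ℝ} (hw : ∀ i, ∑ s, (v i s : ℝ) * w s = 1) {b : ℕ} (hb₁ : 1 ≤ b)
    (hb : (Matrix.of fun s i => (v i s : ℝ)).rank ≤ b) :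
    {a | InNewtonPolyhedron v b a} = Set.range v + {a | InNewtonPolyhedron v (b - 1) a} := by
  ext a
  constructor
  · intro h
    obtain ⟨i, hi, h'⟩ := InNewtonPolyhedron.exists_sub hw hb₁ hb h
    exact ⟨v i, ⟨i, rfl⟩, a - v i, h', add_tsub_cancel_of_le hi⟩
  · rintro ⟨_, ⟨i, rfl⟩, a', h', rfl⟩
    simpa [Nat.sub_add_cancel hb₁] using h'.add i

/-- If the exponent vectors `v 1, …, v q` lie in a hyperplane of `ℝ^d` not containing
the origin and `r₀` is the rank of the matrix with columns `v 1, …, v q`, then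
`\overline{I^b} = I \overline{I^{b-1}}` for every `b ≥ r₀`. -/
theorem normalization_stabilizes_rank {k : Type*} [Field k] (d q : ℕ) (hq : 0 < q)
    (v : Fin q → (Fin d →₀ ℕ)) (w : Fin d → ℝ)
    (hw : ∀ i, ∑ j, (v i j : ℝ) * w j = 1)
    (I : Ideal (MvPolynomial (Fin d) k))
    (hI : I = Ideal.span (Set.range fun i => monomial (v i) (1 : k)))
    (b : ℕ)
    (hb : (Matrix.of fun (i : Fin d) (j : Fin q) => (v j i : ℝ)).rank ≤ b) :
    intCl I b = I * intCl I (b - 1) := by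
  subst hI
  have : Nonempty (Fin q) := ⟨⟨0, hq⟩⟩
  have hb₁ : 1 ≤ b := (one_le_rank_of_sum_mul_eq_one hw).trans hb
  rw [intCl_span_monomial, intCl_span_monomial, Ideal.span_mul_span',
    setOf_inNewtonPolyhedron_eq_add hw hb₁ hb, image_monomial_one_add, ← Set.range_comp]
  rfl
end

section
/- With A' as in the previous statement (r ≥ 2), a point x = (x_1,...,x_{d+1}) lies in the relative interior of the cone R_+A' if and only if x_i > 0 for i = 1,...,d+1 and x_1 + ··· + x_d > r·x_{d+1}. -/
/-! The cone `ℝ₊A'` is the polyhedron `{z ≥ 0, z₁ + ⋯ + z_d - r z_{d+1} ≥ 0}`: every generator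
satisfies these inequalities, and conversely, with `s = z₁ + ⋯ + z_d` and `t = z_{d+1}`, a point
of the polyhedron is `t z_i / s` copies of `(r e_i, 1)` for each `i` plus a nonnegative
remainder along the `e_i`. The interior of a half-space `{0 ≤ f}` is `{0 < f}` because a nonzero
linear functional is an open map. -/

/-- The cone of all finite nonnegative real linear combinations of a set `A`. -/
def coneOf {V : Type*} [AddCommMonoid V] [Module ℝ V] (A : Set V) : Set V :=
  {x | ∃ (t : Finset V) (c : V → ℝ), ↑t ⊆ A ∧ (∀ y ∈ t, 0 ≤ c y) ∧
    x = ∑ y ∈ t, c y • y}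

section Cone

variable {V : Type*} [AddCommMonoid V] [Module ℝ V] {A : Set V}

lemma sum_smul_mem_coneOf {ι : Type*} (s : Finset ι) {c : ι → ℝ} {v : ι → V}
    (hc : ∀ i ∈ s, 0 ≤ c i) (hv : ∀ i ∈ s, v i ∈ A) : ∑ i ∈ s, c i • v i ∈ coneOf A := by
  classical
  refine ⟨s.image v, fun y => ∑ i ∈ s with v i = y, c i, ?_, ?_, ?_⟩
  · simpa [Set.subset_def] using hv
  · exact fun y _ => Finset.sum_nonneg fun i hi => hc i (Finset.mem_filter.1 hi).1
  · simp_rw [Finset.sum_smul]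
    rw [← Finset.sum_fiberwise_of_maps_to fun i hi => Finset.mem_image_of_mem v hi]
    refine Finset.sum_congr rfl fun y _ => Finset.sum_congr rfl fun i hi => ?_
    rw [(Finset.mem_filter.1 hi).2]

lemma coneOf_subset_setOf_nonneg (f : V →ₗ[ℝ] ℝ) (hf : ∀ y ∈ A, 0 ≤ f y) :
    coneOf A ⊆ {z | 0 ≤ f z} := by
  rintro _ ⟨t, c, htA, hc, rfl⟩
  simp only [Set.mem_ofPred_eq, map_sum, map_smul, smul_eq_mul]
  exact Finset.sum_nonneg fun y hy => mul_nonneg (hc y hy) (hf y (htA hy))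

end Cone

lemma interior_setOf_nonneg {E : Type*} [AddCommGroup E] [Module ℝ E] [TopologicalSpace E]
    [IsTopologicalAddGroup E] [ContinuousSMul ℝ E] [T2Space E] [FiniteDimensional ℝ E]
    {f : E →ₗ[ℝ] ℝ} (hf : f ≠ 0) : interior {z | 0 ≤ f z} = {z | 0 < f z} := by
  have hopen := f.isOpenMap_of_finiteDimensional (LinearMap.surjective_of_ne_zero hf)
  have := hopen.preimage_interior_eq_interior_preimage f.continuous_of_finiteDimensional (Set.Ici 0)
  rw [interior_Ici] at this
  exact this.symm

section Generators

def coneGenerators (d r : ℕ) : Set (Fin (d + 1) → ℝ) :=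
  (Set.range fun i : Fin d => Pi.single (Fin.castSucc i) (1 : ℝ)) ∪
    {y | ∃ a : Fin d → ℕ, (∑ j, a j) = r ∧ y = Fin.snoc (fun j => (a j : ℝ)) 1}

def slack (d r : ℕ) : (Fin (d + 1) → ℝ) →ₗ[ℝ] ℝ :=
  ∑ i : Fin d, LinearMap.proj i.castSucc - (r : ℝ) • LinearMap.proj (Fin.last d)

variable {d r : ℕ}

lemma slack_apply (z : Fin (d + 1) → ℝ) :
    slack d r z = ∑ i : Fin d, z i.castSucc - r * z (Fin.last d) := by
  simp [slack]

lemma slack_ne_zero (hr : r ≠ 0) : slack d r ≠ 0 := by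
  intro h
  have := LinearMap.congr_fun h (Pi.single (Fin.last d) 1)
  simp [slack_apply, Fin.castSucc_ne_last, hr] at this

lemma nonneg_of_mem_coneGenerators {y : Fin (d + 1) → ℝ} (hy : y ∈ coneGenerators d r)
    (i : Fin (d + 1)) : 0 ≤ y i := by
  rcases hy with ⟨j, rfl⟩ | ⟨a, -, rfl⟩
  · simp only [Pi.single_apply]
    split_ifs <;> norm_num
  · induction i using Fin.lastCases <;> simp

lemma slack_nonneg_of_mem_coneGenerators {y : Fin (d + 1) → ℝ} (hy : y ∈ coneGenerators d r) :
    0 ≤ slack d r y := by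
  rcases hy with ⟨j, rfl⟩ | ⟨a, ha, rfl⟩
  · simp [slack_apply, Pi.single_apply, Fin.castSucc_ne_last]
  · simp [slack_apply, ← ha]

lemma snoc_single_mem_coneGenerators (i : Fin d) :
    (Fin.snoc (Pi.single i (r : ℝ)) 1 : Fin (d + 1) → ℝ) ∈ coneGenerators d r :=
  Or.inr ⟨Pi.single i r, by simp, by congr 1; ext j; simp [Pi.single_apply]⟩

lemma mem_coneOf_coneGenerators (hr : 0 < r) {z : Fin (d + 1) → ℝ} (hz : ∀ i, 0 ≤ z i)
    (hslack : 0 ≤ slack d r z) : z ∈ coneOf (coneGenerators d r) := by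
  set s := ∑ i : Fin d, z i.castSucc
  set t := z (Fin.last d)
  rw [slack_apply] at hslack
  have hs : 0 ≤ s := Finset.sum_nonneg fun i _ => hz _
  have hts : t * s / s = t := by
    rcases eq_or_ne s 0 with h | h
    · have : t = 0 := by nlinarith [hz (Fin.last d), (Nat.cast_pos.2 hr : (0 : ℝ) < r)]
      simp [this]
    · field_simp
  set c : Fin d → ℝ := fun i => t * z i.castSucc / s
  have hc : ∀ i, 0 ≤ c i := fun i => div_nonneg (mul_nonneg (hz _) (hz _)) hs
  have hrc : ∀ i, r * c i ≤ z i.castSucc := fun i => by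
    rw [mul_div_assoc', ← mul_assoc]
    exact div_le_of_le_mul₀ hs (hz _) (by nlinarith [hz i.castSucc])
  have hdecomp : z = ∑ k : Fin d ⊕ Fin d,
      Sum.elim c (fun i => z i.castSucc - r * c i) k •
        Sum.elim (fun i => Fin.snoc (Pi.single i (r : ℝ)) 1)
          (fun i => Pi.single i.castSucc 1) k := by
    ext j
    induction j using Fin.lastCases with
    | last => simpa [Fin.castSucc_ne_last, c, ← Finset.sum_div, ← Finset.mul_sum] using hts.symm
    | cast k => simp [Pi.single_apply, mul_comm]
  rw [hdecomp]
  refine sum_smul_mem_coneOf _ (fun k _ => ?_) (fun k _ => ?_)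
  · cases k with
    | inl i => exact hc i
    | inr i => exact sub_nonneg.2 (hrc i)
  · cases k with
    | inl i => exact snoc_single_mem_coneGenerators i
    | inr i => exact Or.inl ⟨i, rfl⟩

lemma coneOf_coneGenerators (hr : 0 < r) :
    coneOf (coneGenerators d r) = {z | ∀ i, 0 ≤ z i} ∩ {z | 0 ≤ slack d r z} := by
  refine Set.Subset.antisymm (fun z hz => ⟨fun i => ?_, ?_⟩) fun z hz => ?_
  · exact coneOf_subset_setOf_nonneg (LinearMap.proj i)
      (fun y hy => nonneg_of_mem_coneGenerators hy i) hz
  · exact coneOf_subset_setOf_nonneg _ (fun y => slack_nonneg_of_mem_coneGenerators) hz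
  · exact mem_coneOf_coneGenerators hr hz.1 hz.2

lemma interior_coneOf_coneGenerators (hr : 0 < r) :
    interior (coneOf (coneGenerators d r)) = {z | ∀ i, 0 < z i} ∩ {z | 0 < slack d r z} := by
  have hproj : ∀ i : Fin (d + 1), (LinearMap.proj i : (Fin (d + 1) → ℝ) →ₗ[ℝ] ℝ) ≠ 0 :=
    fun i h => by simpa using LinearMap.congr_fun h (Pi.single i 1)
  rw [coneOf_coneGenerators hr, interior_inter, Set.ofPred_forall, Set.ofPred_forall,
    interior_iInter_of_finite, interior_setOf_nonneg (slack_ne_zero hr.ne')]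
  congr 1
  exact Set.iInter_congr fun i => interior_setOf_nonneg (hproj i)

end Generators

theorem mem_interior_cone_iff_general (d r : ℕ) (hr : 2 ≤ r)
    (x : Fin (d + 1) → ℝ) :
    x ∈ interior (coneOf ((Set.range fun i : Fin d =>
          Pi.single (Fin.castSucc i) (1 : ℝ)) ∪
        {y : Fin (d + 1) → ℝ | ∃ a : Fin d → ℕ, (∑ j, a j) = r ∧
          y = Fin.snoc (fun j => (a j : ℝ)) 1})) ↔
      (∀ i, 0 < x i) ∧ (r : ℝ) * x (Fin.last d) < ∑ i : Fin d, x (Fin.castSucc i) := by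
  change x ∈ interior (coneOf (coneGenerators d r)) ↔ _
  rw [interior_coneOf_coneGenerators (by omega)]
  simp [slack_apply]

/-- A point `x ∈ ℝ^(d+1)` lies in the (relative) interior of the cone generated by
`A' = {e 1, …, e d} ∪ {(a, 1) : a ∈ ℕ^d, |a| = r}` iff all its coordinates are
positive and `x 1 + ⋯ + x d > r * x (d+1)`.  (The cone is full-dimensional, so
the relative interior is the topological interior.) -/
theorem mem_interior_cone_iff (d r : ℕ) (hd : 1 ≤ d) (hr : 2 ≤ r)
    (x : Fin (d + 1) → ℝ) :
    x ∈ interior (coneOf ((Set.range fun i : Fin d =>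
          Pi.single (Fin.castSucc i) (1 : ℝ)) ∪
        {y : Fin (d + 1) → ℝ | ∃ a : Fin d → ℕ, (∑ j, a j) = r ∧
          y = Fin.snoc (fun j => (a j : ℝ)) 1})) ↔
      (∀ i, 0 < x i) ∧ (r : ℝ) * x (Fin.last d) < ∑ i : Fin d, x (Fin.castSucc i) :=
  mem_interior_cone_iff_general d r hr x
end

section
/- Let r ≥ d ≥ 1 with r ≥ 2. Then every lattice point (a,b) ∈ Z^{d+1} in the interior of the cone generated by A' = {e_1,...,e_d} ∪ {(v,1) : v ∈ N^d, |v| = r} satisfies |a| + (1-r)b ≥ 2, and the point (r-d+2, 1, ..., 1, 1) (i.e., a = (r-d+2,1,...,1), b = 1) attains the value 2. (Equivalently, the a-invariant of the Rees algebra of the r-th Veronese ideal is -2 when r ≥ d.) -/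
lemma sum_if_zero (m : ℕ) (c : ℤ) :
    (∑ i : Fin (m + 1), if (i : ℕ) = 0 then c else 1) = c + m := by
  rw [Fin.sum_univ_succ]
  simp [Fin.val_succ]

/-- For `r ≥ d ≥ 1`, `r ≥ 2`: every lattice point `(a, b) ∈ ℤ^(d+1)` in the interior
of the cone generated by `{e 1, …, e d} ∪ {(v, 1) : v ∈ ℕ^d, |v| = r}` (i.e. with all
coordinates positive and `|a| > r b`) satisfies `|a| + (1 - r) b ≥ 2`, and the point
`a = (r - d + 2, 1, …, 1)`, `b = 1` attains the value `2`.  Equivalently, the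
`a`-invariant of the Rees algebra of the `r`-th Veronese ideal is `-2` when `r ≥ d`. -/
theorem veronese_a_invariant_large_r (d r : ℕ) (hd : 1 ≤ d) (hdr : d ≤ r)
    (hr : 2 ≤ r) :
    (∀ (a : Fin d → ℤ) (b : ℤ), (∀ i, 0 < a i) → 0 < b →
        (r : ℤ) * b < ∑ i, a i → 2 ≤ (∑ i, a i) + (1 - r) * b) ∧
    ((∀ i : Fin d, 0 < (if (i : ℕ) = 0 then (r : ℤ) - d + 2 else 1)) ∧
      (r : ℤ) * 1 < (∑ i : Fin d, if (i : ℕ) = 0 then (r : ℤ) - d + 2 else 1) ∧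
      (∑ i : Fin d, if (i : ℕ) = 0 then (r : ℤ) - d + 2 else 1) + (1 - r) * 1 = 2) := by
  obtain ⟨m, rfl⟩ : ∃ m, d = m + 1 := ⟨d - 1, (Nat.succ_pred_eq_of_pos hd).symm⟩
  have hdr' : (m : ℤ) + 1 ≤ r := by exact_mod_cast hdr
  refine ⟨fun a b ha hb hlt => ?_, fun i => ?_, ?_, ?_⟩
  · have h1 : (r : ℤ) * b + 1 ≤ ∑ i, a i := hlt
    nlinarith
  · split <;> push_cast <;> linarith
  · rw [sum_if_zero]; push_cast; linarith
  · rw [sum_if_zero]; push_cast; ring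
end

section
/- Let 2 ≤ r < d, and write d = qr + s with 0 ≤ s < r. Then the minimum of |a| + (1-r)b over all lattice points (a,b) ∈ Z^{d+1} in the interior of the cone R_+A', i.e. over all a ∈ Z^d, b ∈ Z with a_i ≥ 1 for all i, b ≥ 1 and |a| ≥ rb + 1, equals q+2 if s ≥ 2 and q+1 if s ∈ {0,1}. -/
lemma veronese_aux (d r q s : ℕ) (c : ℤ) (hr : 2 ≤ r) (hrd : r < d)
    (hd : d = q * r + s) (hs : s < r)
    (hc : (2 ≤ s ∧ c = 1) ∨ (s < 2 ∧ c = 0)) :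
    IsLeast {m : ℤ | ∃ (a : Fin d → ℤ) (b : ℤ), (∀ i, 1 ≤ a i) ∧ 1 ≤ b ∧
        (r : ℤ) * b + 1 ≤ ∑ i, a i ∧ m = (∑ i, a i) + (1 - r) * b}
      ((q : ℤ) + 1 + c) := by
  have hq : 1 ≤ q := by nlinarith [hd, hs, hrd]
  have hd0 : 0 < d := by omega
  have hc01 : c = 0 ∨ c = 1 := by rcases hc with ⟨_, h⟩ | ⟨_, h⟩ <;> omega
  constructor
  · -- membership: take b = q + c, a = all ones except one coordinate
    set b : ℤ := (q : ℤ) + c with hb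
    have hb1 : 1 ≤ b := by rcases hc01 with h | h <;> simp [hb, h] <;> omega
    have he : 0 ≤ (r : ℤ) * b + 1 - d := by
      rcases hc with ⟨h2, hc1⟩ | ⟨h2, hc0⟩
      · rw [hb, hc1]; push_cast [hd]; nlinarith
      · rw [hb, hc0]; push_cast [hd]; nlinarith
    set e : ℤ := (r : ℤ) * b + 1 - d with heq
    refine ⟨fun i => 1 + (if i = ⟨0, hd0⟩ then e else 0), b, ?_, hb1, ?_, ?_⟩
    · intro i; dsimp only; split <;> omega
    · have : ∑ i : Fin d, (1 + (if i = ⟨0, hd0⟩ then e else 0)) = (d : ℤ) + e := by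
        rw [Finset.sum_add_distrib, Finset.sum_const, Finset.sum_ite_eq' Finset.univ]
        simp
      rw [this]; omega
    · have : ∑ i : Fin d, (1 + (if i = ⟨0, hd0⟩ then e else 0)) = (d : ℤ) + e := by
        rw [Finset.sum_add_distrib, Finset.sum_const, Finset.sum_ite_eq' Finset.univ]
        simp
      rw [this, heq, hb]; ring
  · -- lower bound
    rintro m ⟨a, b, ha, hb1, hsum, rfl⟩
    have hSd : (d : ℤ) ≤ ∑ i, a i := by
      calc (d : ℤ) = ∑ _i : Fin d, (1 : ℤ) := by simp
      _ ≤ ∑ i, a i := Finset.sum_le_sum fun i _ => ha i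
    set S : ℤ := ∑ i, a i with hS
    have hr' : (2 : ℤ) ≤ r := by exact_mod_cast hr
    have hdz : (d : ℤ) = (q : ℤ) * r + s := by exact_mod_cast hd
    rcases le_or_gt ((q : ℤ) + c) b with hcase | hcase
    · -- b ≥ q + c : use S ≥ r b + 1
      nlinarith [hsum]
    · -- b ≤ q + c - 1 : use S ≥ d
      have hqb : 0 ≤ (q : ℤ) - b := by rcases hc01 with h | h <;> omega
      have key : 2 * ((q : ℤ) - b) ≤ (r : ℤ) * ((q : ℤ) - b) :=
        mul_le_mul_of_nonneg_right hr' hqb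
      rcases hc with ⟨h2, hc1⟩ | ⟨h2, hc0⟩ <;> subst_vars <;> nlinarith [hSd, key]

/-- For `2 ≤ r < d` with `d = q r + s`, `0 ≤ s < r`: the minimum of
`|a| + (1 - r) b` over all lattice points `(a, b) ∈ ℤ^(d+1)` with `a i ≥ 1` for all
`i`, `b ≥ 1`, and `|a| ≥ r b + 1` equals `q + 2` if `s ≥ 2` and `q + 1` if
`s ∈ {0, 1}`.  (This computes `-a(S)` for the Rees algebra of the `r`-th Veronese
ideal.) -/
theorem veronese_a_invariant_min (d r q s : ℕ) (hr : 2 ≤ r) (hrd : r < d)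
    (hd : d = q * r + s) (hs : s < r)
    :
    IsLeast {m : ℤ | ∃ (a : Fin d → ℤ) (b : ℤ), (∀ i, 1 ≤ a i) ∧ 1 ≤ b ∧
        (r : ℤ) * b + 1 ≤ ∑ i, a i ∧ m = (∑ i, a i) + (1 - r) * b}
      (if 2 ≤ s then (q : ℤ) + 2 else (q : ℤ) + 1) := by
  split_ifs with h
  · have := veronese_aux d r q s 1 hr hrd hd hs (Or.inl ⟨h, rfl⟩)
    rw [show ((q:ℤ)+2) = (q:ℤ)+1+1 from by ring]; exact this
  · have := veronese_aux d r q s 0 hr hrd hd hs (Or.inr ⟨by omega, rfl⟩)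
    rw [show ((q:ℤ)+1) = (q:ℤ)+1+0 from by ring]; exact this
end

section
/- Let 2 ≤ r < d, write d = qr + s with 2 ≤ s < r. Then for all integers a_1,...,a_d ≥ 1 and b ≥ 1 with a_1 + ··· + a_d ≥ rb + 1, one has (a_1 + ··· + a_d) + (1-r)b ≥ q + 2, and equality is attained by a_i = 2 for 1 ≤ i ≤ r-s+1, a_i = 1 for r-s+2 ≤ i ≤ d, and b = q+1. -/
lemma sum_if_lt (d k : ℕ) (hk : k ≤ d) :
    (∑ i ∈ Finset.range d, if i < k then (2 : ℤ) else 1) = d + k := by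
  induction d with
  | zero => simp_all
  | succ n ih =>
    rw [Finset.sum_range_succ]
    rcases eq_or_lt_of_le hk with h | h
    · subst h
      have h2 : (∑ i ∈ Finset.range n, if i < n + 1 then (2 : ℤ) else 1)
          = ∑ _i ∈ Finset.range n, (2 : ℤ) :=
        Finset.sum_congr rfl fun i hi => if_pos (by simp at hi; omega)
      rw [h2]
      simp; push_cast; ring
    · rw [ih (by omega)]
      have h2 : ¬ n < k := by omega
      simp [h2]; push_cast; ring

/-- The case `s ≥ 2`: for `2 ≤ r < d`, `d = q r + s`, `2 ≤ s < r`, all integers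
`a 1, …, a d ≥ 1` and `b ≥ 1` with `a 1 + ⋯ + a d ≥ r b + 1` satisfy
`(a 1 + ⋯ + a d) + (1 - r) b ≥ q + 2`, and equality is attained by taking the
first `r - s + 1` entries equal to `2`, the remaining entries equal to `1`, and
`b = q + 1`. -/
theorem veronese_a_invariant_case_s_ge_two (d r q s : ℕ) (hr : 2 ≤ r)
    (hrd : r < d) (hd : d = q * r + s) (hs2 : 2 ≤ s) (hs : s < r) :
    (∀ (a : Fin d → ℤ) (b : ℤ), (∀ i, 1 ≤ a i) → 1 ≤ b →
        (r : ℤ) * b + 1 ≤ ∑ i, a i →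
        (q : ℤ) + 2 ≤ (∑ i, a i) + (1 - r) * b) ∧
    ((r : ℤ) * ((q : ℤ) + 1) + 1 ≤
        (∑ i : Fin d, if (i : ℕ) < r - s + 1 then (2 : ℤ) else 1) ∧
      (∑ i : Fin d, if (i : ℕ) < r - s + 1 then (2 : ℤ) else 1) +
          (1 - r) * ((q : ℤ) + 1) = (q : ℤ) + 2) := by
  constructor
  · intro a b ha hb hsum
    set S := ∑ i, a i with hS
    have hSd : (d : ℤ) ≤ S := by
      calc (d : ℤ) = ∑ _i : Fin d, (1 : ℤ) := by simp
        _ ≤ S := Finset.sum_le_sum fun i _ => ha i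
    have hrb : (r : ℤ) * b ≤ S - 1 := by linarith
    have hr1 : (0 : ℤ) ≤ (r : ℤ) - 1 := by
      have : (2 : ℤ) ≤ r := by exact_mod_cast hr
      linarith
    have key : (r : ℤ) * (S + (1 - r) * b) ≥ S + r - 1 := by
      have := mul_le_mul_of_nonneg_left hrb hr1
      nlinarith
    have hdval : (d : ℤ) = q * r + s := by exact_mod_cast hd
    have hs2' : (2 : ℤ) ≤ s := by exact_mod_cast hs2
    have hrpos : (0 : ℤ) < r := by
      have : (2 : ℤ) ≤ r := by exact_mod_cast hr
      linarith
    -- r * (S + (1-r)b) ≥ S + r - 1 ≥ qr + s + r - 1 > r(q+1)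
    have h2 : (r : ℤ) * ((q : ℤ) + 1) < (r : ℤ) * (S + (1 - r) * b) := by
      nlinarith
    have h3 : (q : ℤ) + 1 < S + (1 - r) * b := lt_of_mul_lt_mul_left h2 (le_of_lt hrpos)
    linarith [Int.add_one_le_iff.mpr h3]
  · have hkd : r - s + 1 ≤ d := by omega
    have hsum : (∑ i : Fin d, if (i : ℕ) < r - s + 1 then (2 : ℤ) else 1)
        = (d : ℤ) + (r - s + 1 : ℕ) := by
      rw [Fin.sum_univ_eq_sum_range (fun i => if i < r - s + 1 then (2 : ℤ) else 1)]
      exact sum_if_lt d (r - s + 1) hkd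
    rw [hsum]
    have h1 : ((r : ℤ) - s + 1) = ((r - s + 1 : ℕ) : ℤ) := by
      have : s ≤ r := le_of_lt hs
      push_cast [Nat.sub_add_cancel, this]; ring
    have hdval : (d : ℤ) = q * r + s := by exact_mod_cast hd
    constructor
    · rw [hdval, ← h1]; ring_nf; linarith
    · rw [hdval, ← h1]; ring
end

section
/- Let I be a monomial ideal of R = k[x_1,...,x_d] generated by monomials x^{v_1},...,x^{v_q} all of the same degree r with 2 ≤ r < d, and let J be the r-th Veronese ideal. Then \overline{I^b} = I·\overline{I^{b-1}} for all b ≥ d - ⌊d/r⌋ + 1. -/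
/-!
By the rational criterion, `x^a ∈ \overline{I^b}` iff the polytope
`P(a, b) = {λ ≥ 0 | ∑ λᵢ = b, ∑ λᵢ vᵢ ≤ a}` has a rational point, and `λ ↦ λ + eⱼ` maps
`P(a, b - 1)` into `P(vⱼ + a, b)`. For the converse it suffices to find `λ ∈ P(a, b)` with some
`λⱼ ≥ 1`: then `λ - eⱼ ∈ P(a - vⱼ, b - 1)` and `x^a = x^(vⱼ) x^(a - vⱼ)`.

Otherwise a vertex `λ` of `P(a, b)` has all `λᵢ < 1`. Let `F` be its support and `S` the set of
tight coordinates `t` with `vᵢₜ ≠ 0` for some `i ∈ F`. The vectors `vᵢ`, `i ∈ F`, are linearly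
independent, and so are their restrictions to `S` extended by a coordinate `1`; hence
`#F ≤ d` and `#F ≤ #S + 1`. For `t ∈ S` the number `∑_{i ∈ F} (1 - λᵢ) vᵢₜ = ∑_{i ∈ F} vᵢₜ - aₜ`
is a positive integer, and summing over all `t` gives `r (#F - b)`. So `#S ≤ r (#F - b)`, whence
`r b ≤ (r - 1) d + 1`, i.e. `b ≤ d - ⌊d / r⌋`.
-/

open MvPolynomial Finset Matrix

namespace MonomialLP

/-- The ratio test of the simplex method: walk from `α` along `β` until a coordinate vanishes. -/
theorem exists_add_smul_nonneg_of_neg {J : Type*} [Fintype J] {α β : J → ℚ} (hα : 0 ≤ α)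
    (hβ : ∀ j, α j = 0 → β j = 0) (hneg : ∃ j, β j < 0) :
    ∃ ε : ℚ, 0 ≤ α + ε • β ∧ ∃ j, α j ≠ 0 ∧ α j + ε * β j = 0 := by
  classical
  have hN : ({j | β j < 0} : Finset J).Nonempty := by simpa [Finset.Nonempty] using hneg
  obtain ⟨j₀, hj₀, hmin⟩ := exists_min_image _ (fun j => α j / -β j) hN
  have hβj₀ : β j₀ < 0 := (mem_filter.mp hj₀).2
  refine ⟨α j₀ / -β j₀, fun j => ?_, j₀, fun h => hβj₀.ne (hβ j₀ h),
    by rw [div_neg, neg_mul, div_mul_cancel₀ _ hβj₀.ne, add_neg_cancel]⟩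
  simp only [Pi.add_apply, Pi.smul_apply, smul_eq_mul, Pi.zero_apply]
  rcases le_or_gt 0 (β j) with h | h
  · exact add_nonneg (hα j) (mul_nonneg (div_nonneg (hα j₀) (by linarith)) h)
  · have := hmin j (mem_filter.mpr ⟨mem_univ j, h⟩)
    rw [le_div_iff₀ (neg_pos.mpr h)] at this
    linarith

theorem exists_natCast_eq_mul {ι : Type*} [Fintype ι] {l : ι → ℚ} (hl : 0 ≤ l) :
    ∃ N : ℕ, 0 < N ∧ ∃ n : ι → ℕ, ∀ i, (n i : ℚ) = N * l i := by
  refine ⟨∏ i, (l i).den, prod_pos fun i _ => (l i).pos, ?_⟩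
  have key : ∀ i, ∃ n : ℕ, (n : ℚ) = (∏ i, (l i).den : ℕ) * l i := fun i => by
    obtain ⟨e, he⟩ := dvd_prod_of_mem (fun i => (l i).den) (mem_univ i)
    have hnum : (((l i).num.toNat : ℕ) : ℚ) = (l i).num := by
      exact_mod_cast Int.toNat_of_nonneg (Rat.num_nonneg.mpr (hl i))
    refine ⟨e * (l i).num.toNat, ?_⟩
    rw [he, Nat.cast_mul, Nat.cast_mul, hnum, ← Rat.mul_den_eq_num]
    ring
  choose n hn using key
  exact ⟨n, hn⟩

theorem mul_le_of_card_bounds {r b d s S : ℕ} (hsS : s ≤ S + 1) (hsd : s ≤ d)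
    (hS : S + r * b ≤ r * s) : r * b ≤ (r - 1) * d + 1 := by
  rcases Nat.eq_zero_or_pos r with rfl | hr
  · simp
  obtain ⟨r, rfl⟩ := Nat.exists_eq_add_of_le' hr
  simp only [Nat.add_sub_cancel]
  nlinarith

theorem le_sub_div_of_mul_le {r b d : ℕ} (hr : 2 ≤ r) (h : r * b ≤ (r - 1) * d + 1) :
    b ≤ d - d / r := by
  have hd := Nat.div_add_mod d r
  have he := Nat.mod_lt d (by omega : 0 < r)
  set u := d / r
  set e := d % r
  by_contra! hb
  obtain ⟨r, rfl⟩ := Nat.exists_eq_add_of_le' (by omega : 1 ≤ r)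
  simp only [Nat.add_sub_cancel] at h
  have hdu : d = r * u + u + e := by rw [← hd]; ring
  have : r * u + e + 1 ≤ b := by omega
  nlinarith

section Polytope

variable {ι κ : Type*} [Fintype ι] (V : Matrix ι κ ℚ) (A : κ → ℚ)

def slack (l : ι → ℚ) : ι ⊕ κ → ℚ := Sum.elim l (A - l ᵥ* V)

@[simp] theorem slack_inl (l : ι → ℚ) (i : ι) : slack V A l (.inl i) = l i := rfl

@[simp] theorem slack_inr (l : ι → ℚ) (t : κ) : slack V A l (.inr t) = A t - (l ᵥ* V) t := rfl

theorem slack_add_smul (l c : ι → ℚ) (ε : ℚ) :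
    slack V A (l + ε • c) = slack V A l + ε • slack V 0 c := by
  ext (i | t) <;> simp [add_vecMul, smul_vecMul]
  ring

structure IsFeasible (b : ℚ) (l : ι → ℚ) : Prop where
  nonneg : 0 ≤ l
  vecMul_le : l ᵥ* V ≤ A
  sum_eq : ∑ i, l i = b

/-- `l` is a vertex of the polytope `{l | IsFeasible V A b l}`. -/
def IsBasic (l : ι → ℚ) : Prop :=
  ∀ c : ι → ℚ, ∑ i, c i = 0 → (∀ j, slack V A l j = 0 → slack V 0 c j = 0) → c = 0

variable {V A} {b : ℚ} {l : ι → ℚ}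

theorem isFeasible_iff : IsFeasible V A b l ↔ 0 ≤ slack V A l ∧ ∑ i, l i = b := by
  simp only [Pi.le_def, Sum.forall, slack_inl, slack_inr, Pi.zero_apply, sub_nonneg]
  exact ⟨fun h => ⟨⟨h.nonneg, h.vecMul_le⟩, h.sum_eq⟩, fun h => ⟨h.1.1, h.1.2, h.2⟩⟩

theorem IsFeasible.smul (hl : IsFeasible V A b l) {s : ℚ} (hs : 0 ≤ s) :
    IsFeasible V (s • A) (s * b) (s • l) where
  nonneg := smul_nonneg hs hl.nonneg
  vecMul_le := by
    rw [smul_vecMul]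
    exact smul_le_smul_of_nonneg_left hl.vecMul_le hs
  sum_eq := by simp [← mul_sum, hl.sum_eq]

section Shift

variable [DecidableEq ι]

theorem IsFeasible.add_single (hl : IsFeasible V A b l) (j : ι) :
    IsFeasible V (A + V j) (b + 1) (l + Pi.single j 1) where
  nonneg := add_nonneg hl.nonneg (by simp [Pi.single_nonneg])
  vecMul_le := by
    rw [add_vecMul, single_one_vecMul]
    exact add_le_add hl.vecMul_le le_rfl
  sum_eq := by simp [sum_add_distrib, hl.sum_eq]

theorem IsFeasible.sub_single (hl : IsFeasible V A b l) {j : ι} (hj : 1 ≤ l j) :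
    IsFeasible V (A - V j) (b - 1) (l - Pi.single j 1) where
  nonneg i := by
    rcases eq_or_ne i j with rfl | h
    · simpa using hj
    · simpa [h] using hl.nonneg i
  vecMul_le := by
    rw [sub_vecMul, single_one_vecMul]
    exact sub_le_sub_right hl.vecMul_le _
  sum_eq := by simp [sum_sub_distrib, hl.sum_eq]

theorem IsFeasible.row_le (hl : IsFeasible V A b l) (hV : ∀ i t, 0 ≤ V i t) {j : ι}
    (hj : 1 ≤ l j) : V j ≤ A := fun t => by
  have hl' := hl.sub_single hj
  have h0 : 0 ≤ ((l - Pi.single j 1) ᵥ* V) t :=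
    sum_nonneg fun i _ => mul_nonneg (hl'.nonneg i) (hV i t)
  have := hl'.vecMul_le t
  simp only [Pi.sub_apply] at this
  linarith

end Shift

theorem IsBasic.eq_zero (hl : IsBasic V A l) {c : ι → ℚ} (hc : ∀ i, l i = 0 → c i = 0)
    (hsum : ∑ i, c i = 0)
    (hrow : ∀ t, (l ᵥ* V) t = A t → (∃ i, l i ≠ 0 ∧ V i t ≠ 0) → (c ᵥ* V) t = 0) :
    c = 0 := by
  refine hl c hsum ?_
  rintro (i | t) h
  · simpa using hc i h
  · simp only [slack_inr, sub_eq_zero, Pi.zero_apply, zero_sub, neg_eq_zero] at h ⊢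
    by_cases hmeet : ∃ i, l i ≠ 0 ∧ V i t ≠ 0
    · exact hrow t h.symm hmeet
    · push Not at hmeet
      refine sum_eq_zero fun i _ => ?_
      by_cases hli : l i = 0
      · simp [hc i hli]
      · simp [hmeet i hli]

theorem IsBasic.linearIndepOn_restrict (hl : IsBasic V A l) {T : Finset κ}
    (hT : ∀ t, (l ᵥ* V) t = A t → (∃ i, l i ≠ 0 ∧ V i t ≠ 0) → t ∈ T) :
    LinearIndepOn ℚ (fun i => ((fun t : T => V i t), (1 : ℚ))) {i | l i ≠ 0} := by
  rw [linearIndepOn_iff]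
  intro f hf hf0
  rw [Finsupp.linearCombination_apply, Finsupp.sum_fintype _ _ (by simp)] at hf0
  refine DFunLike.coe_injective (hl.eq_zero (c := f) (fun i hi => ?_) ?_ fun t ht hmeet => ?_)
  · exact (Finsupp.mem_supported' _ _).mp hf i (by simpa using hi)
  · simpa [Prod.snd_sum] using congrArg Prod.snd hf0
  · simpa [Prod.fst_sum, vecMul, dotProduct] using
      congrFun (congrArg Prod.fst hf0) ⟨t, hT t ht hmeet⟩

theorem card_le_finrank_of_linearIndepOn {M : Type*} [AddCommGroup M] [Module ℚ M]
    [FiniteDimensional ℚ M] {w : ι → M} (h : LinearIndepOn ℚ w {i | l i ≠ 0}) :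
    #{i | l i ≠ 0} ≤ Module.finrank ℚ M := by
  classical
  simpa [Fintype.card_subtype] using h.fintype_card_le_finrank

variable [Fintype κ]

theorem IsBasic.linearIndepOn_rows (hl : IsBasic V A l) {r : ℚ} (hr : r ≠ 0)
    (hV : ∀ i, ∑ t, V i t = r) : LinearIndepOn ℚ (fun i => V i) {i | l i ≠ 0} := by
  rw [linearIndepOn_iff]
  intro f hf hf0
  rw [Finsupp.linearCombination_apply, Finsupp.sum_fintype _ _ (by simp), ← vecMul_eq_sum]
    at hf0
  have hsum : ∑ i, f i = 0 := by
    have : ∑ t, (f ᵥ* V) t = r * ∑ i, f i := by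
      simp only [vecMul, dotProduct]
      rw [sum_comm, mul_sum]
      exact sum_congr rfl fun i _ => by rw [← mul_sum, hV, mul_comm]
    simpa [hf0, hr] using this.symm
  refine DFunLike.coe_injective (hl.eq_zero (c := f) (fun i hi => ?_) hsum fun t _ _ => ?_)
  · exact (Finsupp.mem_supported' _ _).mp hf i (by simpa using hi)
  · simp [hf0]

theorem IsFeasible.exists_card_slack_ne_zero_lt (hl : IsFeasible V A b l)
    (hB : ¬ IsBasic V A l) :
    ∃ l', IsFeasible V A b l' ∧ #{j | slack V A l' j ≠ 0} < #{j | slack V A l j ≠ 0} := by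
  simp only [IsBasic, not_forall] at hB
  obtain ⟨c, hc, hzero, hc0⟩ := hB
  rw [isFeasible_iff] at hl
  obtain ⟨i, hi⟩ : ∃ i, c i < 0 := by
    by_contra! h
    exact hc0 (funext fun i => (sum_eq_zero_iff_of_nonneg fun i _ => h i).mp hc i (mem_univ i))
  obtain ⟨ε, hε, j, hj, hj'⟩ := exists_add_smul_nonneg_of_neg hl.1 hzero ⟨.inl i, hi⟩
  refine ⟨l + ε • c, isFeasible_iff.mpr ⟨?_, ?_⟩, ?_⟩
  · rwa [slack_add_smul]
  · simp [sum_add_distrib, ← mul_sum, hc, hl.2]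
  · rw [slack_add_smul]
    refine card_lt_card <| (ssubset_iff_of_subset fun k => ?_).mpr ⟨j, ?_, ?_⟩
    · simp only [mem_filter, mem_univ, true_and, Pi.add_apply, Pi.smul_apply, smul_eq_mul]
      intro hk h0
      simp [h0, hzero k h0] at hk
    · simpa using hj
    · simpa using hj'

theorem IsFeasible.exists_isBasic (hl : IsFeasible V A b l) :
    ∃ m, IsFeasible V A b m ∧ IsBasic V A m := by
  induction hn : #{j | slack V A l j ≠ 0} using Nat.strong_induction_on generalizing l with
  | _ n ih =>
    by_cases hB : IsBasic V A l
    · exact ⟨l, hl, hB⟩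
    obtain ⟨l', hl', hlt⟩ := hl.exists_card_slack_ne_zero_lt hB
    exact ih _ (hn ▸ hlt) hl' rfl

end Polytope

section Exponents

variable {ι σ : Type*} (v : ι → σ →₀ ℕ)

def ratExponents : Matrix ι σ ℚ := Matrix.of fun i t => (v i t : ℚ)

@[simp] theorem ratExponents_apply (i : ι) (t : σ) : ratExponents v i t = v i t := rfl

variable [Fintype ι] {v} {a : σ →₀ ℕ} {b : ℚ} {l : ι → ℚ}

theorem isFeasible_natCast_iff {n : ℕ} {c : ι → ℕ} :
    IsFeasible (ratExponents v) (fun t => a t) n (fun i => c i) ↔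
      ∑ i, c i = n ∧ ∑ i, c i • v i ≤ a := by
  have hle : (fun i => (c i : ℚ)) ᵥ* ratExponents v ≤ (fun t => (a t : ℚ)) ↔
      ∑ i, c i • v i ≤ a := by
    simp only [Pi.le_def, Finsupp.le_def, Finsupp.finsetSum_apply, Finsupp.smul_apply,
      smul_eq_mul, vecMul, dotProduct, ratExponents_apply]
    exact_mod_cast Iff.rfl
  refine ⟨fun h => ⟨by exact_mod_cast h.sum_eq, hle.mp h.vecMul_le⟩,
    fun h => ⟨fun i => by simp, hle.mpr h.2, by exact_mod_cast h.1⟩⟩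

section Shift

variable [DecidableEq ι]

theorem IsFeasible.add_exponent (hl : IsFeasible (ratExponents v) (fun t => a t) b l) (j : ι) :
    IsFeasible (ratExponents v) (fun t => (v j + a) t) (b + 1) (l + Pi.single j 1) := by
  convert hl.add_single j using 1
  ext t
  simp [add_comm]

theorem IsFeasible.exponent_le (hl : IsFeasible (ratExponents v) (fun t => a t) b l) {j : ι}
    (hj : 1 ≤ l j) : v j ≤ a := fun t => by
  have h := hl.row_le (fun i t => Nat.cast_nonneg (v i t)) hj t
  simp only [ratExponents_apply] at h
  exact_mod_cast h

theorem IsFeasible.sub_exponent (hl : IsFeasible (ratExponents v) (fun t => a t) b l) {j : ι}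
    (hj : 1 ≤ l j) :
    IsFeasible (ratExponents v) (fun t => (a - v j) t) (b - 1) (l - Pi.single j 1) := by
  convert hl.sub_single hj using 1
  ext t
  simp [Nat.cast_sub (hl.exponent_le hj t)]

end Shift

theorem one_le_sum_one_sub_mul {m : ι → ℚ} (hm1 : ∀ i, m i < 1) {t : σ}
    (ht : (m ᵥ* ratExponents v) t = a t) (hmeet : ∃ i, m i ≠ 0 ∧ v i t ≠ 0) :
    1 ≤ ∑ i with m i ≠ 0, (1 - m i) * (v i t : ℚ) := by
  obtain ⟨i₁, hi₁, hvi₁⟩ := hmeet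
  have hpos : 0 < ∑ i with m i ≠ 0, (1 - m i) * (v i t : ℚ) :=
    sum_pos' (fun i _ => mul_nonneg (by linarith [hm1 i]) (Nat.cast_nonneg _))
      ⟨i₁, by simpa using hi₁,
        mul_pos (by linarith [hm1 i₁]) (by exact_mod_cast Nat.pos_of_ne_zero hvi₁)⟩
  have hvec : (m ᵥ* ratExponents v) t = ∑ i with m i ≠ 0, m i * (v i t : ℚ) := by
    rw [sum_filter_of_ne fun i _ h => left_ne_zero_of_mul h]
    rfl
  have heq : ∑ i with m i ≠ 0, (1 - m i) * (v i t : ℚ) =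
      ((∑ i with m i ≠ 0, v i t : ℕ) : ℚ) - a t := by
    rw [← ht, hvec]
    push_cast
    simp only [sub_mul, one_mul, sum_sub_distrib]
  rw [heq] at hpos ⊢
  have : a t < ∑ i with m i ≠ 0, v i t := by exact_mod_cast sub_pos.mp hpos
  have : (a t : ℚ) + 1 ≤ ((∑ i with m i ≠ 0, v i t : ℕ) : ℚ) := by exact_mod_cast this
  linarith

variable [Fintype σ]

theorem card_tight_le {m : ι → ℚ} (hm1 : ∀ i, m i < 1) :
    (#{t | (m ᵥ* ratExponents v) t = a t ∧ ∃ i, m i ≠ 0 ∧ v i t ≠ 0} : ℚ) ≤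
      ∑ i with m i ≠ 0, (1 - m i) * ∑ t, (v i t : ℚ) := by
  set R : σ → ℚ := fun t => ∑ i with m i ≠ 0, (1 - m i) * (v i t : ℚ)
  calc (#{t | (m ᵥ* ratExponents v) t = a t ∧ ∃ i, m i ≠ 0 ∧ v i t ≠ 0} : ℚ)
      ≤ ∑ t with (m ᵥ* ratExponents v) t = a t ∧ ∃ i, m i ≠ 0 ∧ v i t ≠ 0, R t := by
        simpa using card_nsmul_le_sum _ R 1 fun t ht =>
          one_le_sum_one_sub_mul hm1 (mem_filter.mp ht).2.1 (mem_filter.mp ht).2.2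
    _ ≤ ∑ t, R t := sum_le_sum_of_subset_of_nonneg (subset_univ _) fun t _ _ =>
        sum_nonneg fun i _ => mul_nonneg (by linarith [hm1 i]) (Nat.cast_nonneg _)
    _ = ∑ i with m i ≠ 0, (1 - m i) * ∑ t, (v i t : ℚ) := by
        simp only [R, mul_sum]
        exact sum_comm

theorem mul_le_of_isBasic {r : ℕ} (hr : r ≠ 0) (hv : ∀ i, ∑ t, v i t = r) {b : ℕ}
    {m : ι → ℚ} (hm : IsFeasible (ratExponents v) (fun t => a t) b m)
    (hbasic : IsBasic (ratExponents v) (fun t => a t) m) (hm1 : ∀ i, m i < 1) :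
    r * b ≤ (r - 1) * Fintype.card σ + 1 := by
  classical
  set S : Finset σ := {t | (m ᵥ* ratExponents v) t = a t ∧ ∃ i, m i ≠ 0 ∧ v i t ≠ 0}
  have hrow : ∀ i, ∑ t, (v i t : ℚ) = r := fun i => by exact_mod_cast hv i
  have hS : #{i | m i ≠ 0} ≤ #S + 1 := by
    simpa using card_le_finrank_of_linearIndepOn
      (hbasic.linearIndepOn_restrict (T := S) fun t ht hmeet => by simpa [S, ht] using hmeet)
  have hd : #{i | m i ≠ 0} ≤ Fintype.card σ := by
    simpa using card_le_finrank_of_linearIndepOn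
      (hbasic.linearIndepOn_rows (by exact_mod_cast hr) hrow)
  have hcount : (#S : ℚ) + r * b ≤ r * #{i | m i ≠ 0} := by
    have h := card_tight_le (v := v) (a := a) hm1
    simp only [hrow, ← sum_mul, sum_sub_distrib, sum_filter_ne_zero, hm.sum_eq, sum_const,
      nsmul_eq_mul, mul_one] at h
    linarith
  exact mul_le_of_card_bounds hS hd (by exact_mod_cast hcount)

theorem exists_isFeasible_one_le {r : ℕ} (hr : 2 ≤ r) (hv : ∀ i, ∑ t, v i t = r) {b : ℕ}
    (hb : Fintype.card σ - Fintype.card σ / r < b)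
    (hl : IsFeasible (ratExponents v) (fun t => a t) b l) :
    ∃ μ, IsFeasible (ratExponents v) (fun t => a t) b μ ∧ ∃ j, 1 ≤ μ j := by
  obtain ⟨m, hm, hbasic⟩ := hl.exists_isBasic
  by_contra! h
  exact hb.not_ge <| le_sub_div_of_mul_le hr <| mul_le_of_isBasic (by omega) hv hm hbasic (h m hm)

end Exponents

section Ideal

variable {ι σ R : Type*} [Fintype ι] [CommSemiring R] (v : ι → σ →₀ ℕ)

theorem span_monomial_pow_le (n : ℕ) :
    Ideal.span (Set.range fun i => monomial (v i) (1 : R)) ^ n ≤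
      Ideal.span ((fun w => monomial w (1 : R)) ''
        {w | ∃ c : ι → ℕ, ∑ i, c i = n ∧ ∑ i, c i • v i = w}) := by
  classical
  induction n with
  | zero =>
    rw [_root_.pow_zero, Ideal.one_eq_top, top_le_iff, Ideal.eq_top_iff_one]
    refine Ideal.subset_span ⟨0, ⟨0, by simp, by simp⟩, ?_⟩
    simp
  | succ n ih =>
    rw [pow_succ']
    refine (Ideal.mul_mono_right ih).trans ?_
    rw [Ideal.span_mul_span', Ideal.span_le]
    rintro _ ⟨_, ⟨i, rfl⟩, _, ⟨_, ⟨c, hc, rfl⟩, rfl⟩, rfl⟩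
    refine Ideal.subset_span ⟨_, ⟨c + Pi.single i 1, ?_, rfl⟩, ?_⟩
    · simp [sum_add_distrib, hc]
    · simp [add_smul, sum_add_distrib, monomial_mul, add_comm]

variable [Nontrivial R]

theorem monomial_mem_span_pow_iff (n : ℕ) (u : σ →₀ ℕ) :
    monomial u (1 : R) ∈ Ideal.span (Set.range fun i => monomial (v i) (1 : R)) ^ n ↔
      ∃ c : ι → ℕ, ∑ i, c i = n ∧ ∑ i, c i • v i ≤ u := by
  classical
  constructor
  · intro h
    obtain ⟨_, ⟨c, hc, rfl⟩, hle⟩ := mem_ideal_span_monomial_image.mp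
      (span_monomial_pow_le v n h) u (by simp [support_monomial])
    exact ⟨c, hc, hle⟩
  · rintro ⟨c, rfl, hle⟩
    rw [← tsub_add_cancel_of_le hle, ← mul_one (1 : R), ← monomial_mul, mul_one,
      monomial_sum_one, ← prod_pow_eq_pow_sum]
    refine Ideal.mul_mem_left _ _ (Ideal.prod_mem_prod fun i _ => ?_)
    simpa [monomial_pow] using Ideal.pow_mem_pow
      (Ideal.subset_span (Set.mem_range_self (f := fun i => monomial (v i) (1 : R)) i)) (c i)

theorem exists_monomial_smul_mem_pow_iff (n : ℕ) (a : σ →₀ ℕ) :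
    (∃ m, 0 < m ∧ monomial (m • a) (1 : R) ∈
        Ideal.span (Set.range fun i => monomial (v i) (1 : R)) ^ (n * m)) ↔
      ∃ l, IsFeasible (ratExponents v) (fun t => a t) n l := by
  simp only [monomial_mem_span_pow_iff, ← isFeasible_natCast_iff]
  constructor
  · rintro ⟨m, hm, c, hc⟩
    have hm' : (m : ℚ) ≠ 0 := by positivity
    refine ⟨(m : ℚ)⁻¹ • fun i => (c i : ℚ), ?_⟩
    convert hc.smul (s := (m : ℚ)⁻¹) (by positivity) using 1
    · ext t
      simp [hm']
    · push_cast
      field_simp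
  · rintro ⟨l, hl⟩
    obtain ⟨N, hN, c, hc⟩ := exists_natCast_eq_mul hl.nonneg
    refine ⟨N, hN, c, ?_⟩
    convert hl.smul (s := N) (Nat.cast_nonneg _) using 1
    · ext t
      simp
    · push_cast
      ring
    · ext i
      simp [hc]

theorem intCl_span_eq {k : Type*} [Field k] (n : ℕ) :
    intCl (Ideal.span (Set.range fun i => monomial (v i) (1 : k))) n =
      Ideal.span ((fun a => monomial a (1 : k)) ''
        {a | ∃ l, IsFeasible (ratExponents v) (fun t => a t) n l}) := by
  simp only [intCl, exists_monomial_smul_mem_pow_iff]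
  congr 1
  ext p
  simp only [Set.mem_ofPred_eq, Set.mem_image]
  exact exists_congr fun a => by rw [and_comm, eq_comm]

end Ideal

end MonomialLP

open MonomialLP in
theorem normalization_stabilizes_equigenerated_general {k : Type*} [Field k]
    (d q r : ℕ) (hr : 2 ≤ r)
    (v : Fin q → (Fin d →₀ ℕ)) (hdeg : ∀ i, (∑ j, v i j) = r)
    (I : Ideal (MvPolynomial (Fin d) k))
    (hI : I = Ideal.span (Set.range fun i => monomial (v i) (1 : k)))
    (b : ℕ) (hb : d - d / r + 1 ≤ b) :
    intCl I b = I * intCl I (b - 1) := by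
  subst hI
  obtain ⟨b, rfl⟩ : ∃ b', b = b' + 1 := ⟨b - 1, by omega⟩
  rw [Nat.add_sub_cancel, intCl_span_eq, intCl_span_eq, Ideal.span_mul_span']
  apply le_antisymm <;> rw [Ideal.span_le]
  · rintro _ ⟨a, ⟨l, hl⟩, rfl⟩
    obtain ⟨μ, hμ, j, hj⟩ :=
      exists_isFeasible_one_le hr hdeg (by rw [Fintype.card_fin]; omega) hl
    refine Ideal.subset_span ⟨_, ⟨j, rfl⟩, _,
      ⟨a - v j, ⟨_, by simpa using hμ.sub_exponent hj⟩, rfl⟩, ?_⟩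
    dsimp only
    rw [monomial_mul, one_mul, add_tsub_cancel_of_le (hμ.exponent_le hj)]
  · rintro _ ⟨_, ⟨i, rfl⟩, _, ⟨a, ⟨l, hl⟩, rfl⟩, rfl⟩
    exact Ideal.subset_span
      ⟨v i + a, ⟨_, by simpa using hl.add_exponent i⟩, by simp [monomial_mul]⟩

/-- If `I` is a monomial ideal of `k[x 1, …, x d]` generated by monomials all of the
same degree `r` with `2 ≤ r < d`, then `\overline{I^b} = I \overline{I^(b-1)}` for
all `b ≥ d - ⌊d / r⌋ + 1`. -/
theorem normalization_stabilizes_equigenerated {k : Type*} [Field k]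
    (d q r : ℕ) (hq : 0 < q) (hr : 2 ≤ r) (hrd : r < d)
    (v : Fin q → (Fin d →₀ ℕ)) (hdeg : ∀ i, (∑ j, v i j) = r)
    (I : Ideal (MvPolynomial (Fin d) k))
    (hI : I = Ideal.span (Set.range fun i => monomial (v i) (1 : k)))
    (b : ℕ) (hb : d - d / r + 1 ≤ b) :
    intCl I b = I * intCl I (b - 1) :=
  normalization_stabilizes_equigenerated_general d q r hr v hdeg I hI b hb
end

section
/- Let a_1,...,a_d be positive integers, v_i = a_i e_i for 1 ≤ i ≤ d, and let v_{d+1},...,v_q ∈ N^d. Set α_0 = (1/a_1,...,1/a_d) and P = conv({v_1,...,v_d} ∪ {v_i : d < i ≤ q, ⟨v_i, α_0⟩ < 1}). Then Q_+^d + conv(v_1,...,v_q) = Q_+^d + P. -/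
/-!
Every generator `v i` already lies in `ℚ₊^d + P`: either `⟨v i, α₀⟩ < 1` and `v i ∈ P`, or
`t = ⟨v i, α₀⟩ ≥ 1` and `v i = (1 - t⁻¹) • v i + t⁻¹ • v i`, where `t⁻¹ • v i` lies on the
simplex `conv(a₁e₁, …, a_d e_d)` and `(1 - t⁻¹) • v i ≥ 0`. Since `ℚ₊^d + P` is convex and
absorbs `ℚ₊^d`, it then contains `ℚ₊^d + conv(v 1, …, v q)`.
-/

open Pointwise Set

section Orthant

variable {𝕜 ι : Type*} [Field 𝕜] [LinearOrder 𝕜] [IsStrictOrderedRing 𝕜]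
  [Fintype ι] [DecidableEq ι] {a : ι → 𝕜} {x : ι → 𝕜}

theorem mem_convexHull_range_single_of_sum_div_eq_one (ha : ∀ i, 0 < a i) (hx : 0 ≤ x)
    (hsum : ∑ i, x i / a i = 1) : x ∈ convexHull 𝕜 (range fun i => Pi.single i (a i)) := by
  have hx_eq : ∑ i, (x i / a i) • Pi.single i (a i) = x := by
    simp_rw [← Pi.single_smul', smul_eq_mul, div_mul_cancel₀ _ (ha _).ne']
    exact Finset.univ_sum_single x
  rw [← hx_eq]
  exact (convex_convexHull 𝕜 _).sum_mem (fun i _ => div_nonneg (hx i) (ha i).le) hsum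
    fun i _ => subset_convexHull 𝕜 _ (mem_range_self i)

theorem mem_Ici_add_convexHull_range_single (ha : ∀ i, 0 < a i) (hx : 0 ≤ x)
    (h1 : 1 ≤ ∑ i, x i / a i) :
    x ∈ Ici 0 + convexHull 𝕜 (range fun i => Pi.single i (a i)) := by
  set t := ∑ i, x i / a i
  have ht : 0 < t := one_pos.trans_le h1
  have hscaled : t⁻¹ • x ∈ convexHull 𝕜 (range fun i => Pi.single i (a i)) := by
    refine mem_convexHull_range_single_of_sum_div_eq_one ha (smul_nonneg (by positivity) hx) ?_
    simp only [Pi.smul_apply, smul_eq_mul, mul_div_assoc, ← Finset.mul_sum]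
    exact inv_mul_cancel₀ ht.ne'
  have hrest : (1 - t⁻¹) • x ∈ Ici 0 :=
    smul_nonneg (sub_nonneg.2 (inv_le_one_of_one_le₀ h1)) hx
  convert add_mem_add hrest hscaled using 1
  rw [← add_smul, sub_add_cancel, one_smul]

end Orthant

theorem add_convexHull_subset_of_subset {𝕜 E : Type*} [Semiring 𝕜] [PartialOrder 𝕜]
    [AddCommMonoid E] [Module 𝕜 E] {K C T : Set E} (hK : Convex 𝕜 K) (hKK : K + K ⊆ K)
    (hC : Convex 𝕜 C) (hT : T ⊆ K + C) : K + convexHull 𝕜 T ⊆ K + C :=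
  calc K + convexHull 𝕜 T ⊆ K + (K + C) := add_subset_add_left (convexHull_min hT (hK.add hC))
    _ = (K + K) + C := (add_assoc K K C).symm
    _ ⊆ K + C := add_subset_add_right hKK

/-- Let `a 1, …, a d` be positive integers, `v i = a i • e i` for `i ≤ d`,
`v (d+1), …, v q ∈ ℕ^d`, `α₀ = (1/a 1, …, 1/a d)`, and
`P = conv({v 1, …, v d} ∪ {v i : ⟨v i, α₀⟩ < 1})`.  Then
`ℚ₊^d + conv(v 1, …, v q) = ℚ₊^d + P`. -/
theorem newton_polyhedron_reduction (d q : ℕ) (hdq : d ≤ q)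
    (a : Fin d → ℕ) (ha : ∀ i, 0 < a i)
    (v : Fin q → (Fin d → ℚ))
    (hv1 : ∀ i : Fin d, v (Fin.castLE hdq i) = Pi.single i (a i : ℚ))
    (hvnat : ∀ i j, ∃ m : ℕ, v i j = (m : ℚ)) :
    {x : Fin d → ℚ | ∀ j, 0 ≤ x j} + convexHull ℚ (Set.range v) =
      {x : Fin d → ℚ | ∀ j, 0 ≤ x j} +
        convexHull ℚ ((Set.range fun i : Fin d => v (Fin.castLE hdq i)) ∪
          {x | (∃ i, v i = x) ∧ ∑ j, x j / (a j : ℚ) < 1}) := by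
  change Ici 0 + _ = Ici 0 + _
  have hv_nonneg : ∀ i, 0 ≤ v i := fun i j => by
    obtain ⟨m, hm⟩ := hvnat i j
    exact hm ▸ Nat.cast_nonneg m
  have hIci : Ici (0 : Fin d → ℚ) + Ici 0 ⊆ Ici 0 := by
    simpa only [add_zero] using Ici_add_Ici_subset (0 : Fin d → ℚ) 0
  refine Subset.antisymm (add_convexHull_subset_of_subset (convex_Ici 0) hIci
    (convex_convexHull ℚ _) ?_) (add_subset_add_left (convexHull_mono ?_))
  · rintro _ ⟨i, rfl⟩
    by_cases h : ∑ j, v i j / (a j : ℚ) < 1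
    · simpa using add_mem_add (self_mem_Ici (a := (0 : Fin d → ℚ)))
        (subset_convexHull ℚ _ (Or.inr ⟨⟨i, rfl⟩, h⟩))
    · have hmem := mem_Ici_add_convexHull_range_single (fun j => Nat.cast_pos.2 (ha j))
        (hv_nonneg i) (not_lt.1 h)
      simp only [← hv1] at hmem
      exact add_subset_add_left (convexHull_mono subset_union_left) hmem
  · rintro _ (⟨i, rfl⟩ | ⟨⟨i, rfl⟩, -⟩) <;> exact mem_range_self _
end

section
/- With a_i, v_i, α_0 as above, if ⟨v_i, α_0⟩ ≥ 1 for all i = 1,...,q, then \overline{I^n} = \overline{(x_1^{a_1},...,x_d^{a_d})^n} for all n ≥ 1, where I = (x^{v_1},...,x^{v_q}). -/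
open MvPolynomial

/-! Give `x_j` the weight `1 / a_j`. Every generator of `I` has weight at least `1`, so every
monomial in `I^(n m)` has weight at least `n m`, and `x^(m b) ∈ I^(n m)` forces `b` to have weight
at least `n`. Conversely, if `b` has weight at least `n` and `M = ∏ a_j`, then `x^(M b)` is a
product of `M · weight b ≥ n M` pure powers `x_j^(a_j)`. The reverse inclusion is immediate since
the pure powers are among the generators of `I`. -/

theorem Finsupp.weight_mono {σ M : Type*} [AddCommMonoid M] [PartialOrder M]
    [IsOrderedAddMonoid M] {w : σ → M} (hw : ∀ i, 0 ≤ w i) :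
    Monotone (weight w : (σ →₀ ℕ) → M) := by
  intro t u htu
  obtain ⟨e, rfl⟩ := exists_add_of_le htu
  rw [map_add]
  exact le_add_of_nonneg_right (Finset.sum_nonneg fun i _ => nsmul_nonneg (hw i) _)

namespace MvPolynomial

open Finsupp

variable {σ R M : Type*} [CommSemiring R]

section weightGeIdeal

variable [AddCommMonoid M] [PartialOrder M] (w : σ → M)

noncomputable def weightGeIdeal (c : M) : Ideal (MvPolynomial σ R) :=
  Ideal.span ((fun t => monomial t 1) '' {t | c ≤ weight w t})

variable {w} [IsOrderedAddMonoid M]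

theorem weightGeIdeal_mul_le (r s : M) :
    weightGeIdeal (R := R) w r * weightGeIdeal w s ≤ weightGeIdeal w (r + s) := by
  rw [weightGeIdeal, weightGeIdeal, Ideal.span_mul_span', Ideal.span_le]
  rintro _ ⟨_, ⟨t, ht, rfl⟩, _, ⟨t', ht', rfl⟩, rfl⟩
  refine Ideal.subset_span ⟨t + t', ?_, by simp [monomial_mul]⟩
  simpa using add_le_add ht ht'

theorem pow_le_weightGeIdeal {I : Ideal (MvPolynomial σ R)} {c : M}
    (hI : I ≤ weightGeIdeal w c) : ∀ N : ℕ, I ^ N ≤ weightGeIdeal w (N • c)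
  | 0 => by
    rw [pow_zero, zero_smul, Ideal.one_eq_top, top_le_iff, Ideal.eq_top_iff_one]
    exact Ideal.subset_span ⟨0, by simp, by simp⟩
  | N + 1 => by
    rw [pow_succ, succ_nsmul]
    exact (Ideal.mul_mono (pow_le_weightGeIdeal hI N) hI).trans (weightGeIdeal_mul_le _ _)

theorem le_weight_of_monomial_mem_weightGeIdeal [Nontrivial R] (hw : ∀ i, 0 ≤ w i) {c : M}
    {u : σ →₀ ℕ} (h : monomial u (1 : R) ∈ weightGeIdeal w c) : c ≤ weight w u := by
  classical
  obtain ⟨t, ht, htu⟩ := mem_ideal_span_monomial_image.mp h u (by simp)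
  exact ht.trans (weight_mono hw htu)

end weightGeIdeal

theorem nsmul_le_weight_of_monomial_smul_mem_pow [Nontrivial R] [AddCommMonoid M] [LinearOrder M]
    [IsOrderedCancelAddMonoid M] {w : σ → M} (hw : ∀ i, 0 ≤ w i) {I : Ideal (MvPolynomial σ R)}
    {c : M} (hI : I ≤ weightGeIdeal w c) {n m : ℕ} (hm : m ≠ 0) {b : σ →₀ ℕ}
    (h : monomial (m • b) (1 : R) ∈ I ^ (n * m)) : n • c ≤ weight w b := by
  have := le_weight_of_monomial_mem_weightGeIdeal hw (pow_le_weightGeIdeal hI _ h)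
  rw [map_nsmul, mul_nsmul] at this
  exact le_of_nsmul_le_nsmul_right hm this

theorem monomial_mem_span_pure_powers_pow [Fintype σ] (a : σ → ℕ) {u : σ →₀ ℕ}
    (hu : ∀ j, a j ∣ u j) :
    monomial u (1 : R) ∈
      Ideal.span (Set.range fun j => monomial (single j (a j)) (1 : R)) ^ ∑ j, u j / a j := by
  have hprod : monomial u (1 : R) = ∏ j, monomial (single j (a j)) 1 ^ (u j / a j) := by
    simp_rw [monomial_pow, one_pow, ← monomial_sum_one]
    congr
    ext i
    rw [finsetSum_apply, Finset.sum_eq_single i (fun j _ hji => by simp [hji])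
      (by simp), smul_single, smul_eq_mul, single_eq_same, Nat.div_mul_cancel (hu i)]
  rw [hprod, ← Finset.prod_pow_eq_pow_sum]
  exact Ideal.prod_mem_prod fun j _ => Ideal.pow_mem_pow (Ideal.subset_span (Set.mem_range_self j)) _

end MvPolynomial

open Finsupp in
theorem monomial_mem_intCl_span_pure_powers {k σ : Type*} [Field k] [Fintype σ] {a : σ → ℕ}
    (ha : ∀ j, 0 < a j) {b : σ →₀ ℕ} {n : ℕ} (hb : (n : ℚ) ≤ weight (fun j => (a j : ℚ)⁻¹) b) :
    monomial b (1 : k) ∈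
      intCl (Ideal.span (Set.range fun j => monomial (single j (a j)) (1 : k))) n := by
  set M := ∏ j, a j
  have hdvd : ∀ j, a j ∣ (M • b) j := fun j =>
    (Finset.dvd_prod_of_mem a (Finset.mem_univ j)).mul_right _
  have hle : n * M ≤ ∑ j, (M • b) j / a j := by
    have hsum : ((∑ j, (M • b) j / a j : ℕ) : ℚ) = M * weight (fun j => (a j : ℚ)⁻¹) b := by
      rw [Nat.cast_sum, weight_eq_sum, Finset.mul_sum]
      refine Finset.sum_congr rfl fun j _ => ?_
      rw [Nat.cast_div (hdvd j) (Nat.cast_ne_zero.mpr (ha j).ne')]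
      simp [div_eq_mul_inv, mul_assoc]
    have : ((n * M : ℕ) : ℚ) ≤ ∑ j, (M • b) j / a j := by
      rw [hsum, Nat.cast_mul, mul_comm]
      exact mul_le_mul_of_nonneg_left hb (Nat.cast_nonneg M)
    exact_mod_cast this
  exact Ideal.subset_span ⟨b, rfl, M, Finset.prod_pos fun j _ => ha j,
    Ideal.pow_le_pow_right hle (monomial_mem_span_pure_powers_pow a hdvd)⟩

theorem intCl_mono {k σ : Type*} [Field k] {I J : Ideal (MvPolynomial σ k)} (h : I ≤ J) (n : ℕ) :
    intCl I n ≤ intCl J n :=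
  Ideal.span_mono fun _ ⟨b, hb, m, hm, hmem⟩ => ⟨b, hb, m, hm, Ideal.pow_right_mono h _ hmem⟩

theorem intCl_eq_intCl_pure_powers_general {k : Type*} [Field k] (d q : ℕ) (hdq : d ≤ q)
    (a : Fin d → ℕ) (ha : ∀ i, 0 < a i)
    (v : Fin q → (Fin d →₀ ℕ))
    (hv1 : ∀ i : Fin d, v (Fin.castLE hdq i) = Finsupp.single i (a i))
    (hge : ∀ i, (1 : ℚ) ≤ ∑ j, (v i j : ℚ) / (a j : ℚ))
    (n : ℕ) :
    intCl (Ideal.span (Set.range fun i => monomial (v i) (1 : k))) n =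
      intCl (Ideal.span (Set.range fun i : Fin d =>
        monomial (Finsupp.single i (a i)) (1 : k))) n := by
  set w : Fin d → ℚ := fun j => (a j : ℚ)⁻¹
  have hw : ∀ j, 0 ≤ w j := fun j => inv_nonneg.mpr (Nat.cast_nonneg _)
  have hI : Ideal.span (Set.range fun i => monomial (v i) (1 : k)) ≤ weightGeIdeal w 1 := by
    refine Ideal.span_le.mpr ?_
    rintro _ ⟨i, rfl⟩
    refine Ideal.subset_span ⟨v i, ?_, rfl⟩
    simpa [w, Finsupp.weight_eq_sum, div_eq_mul_inv] using hge i
  refine le_antisymm (Ideal.span_le.mpr ?_) (intCl_mono (Ideal.span_mono ?_) n)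
  · rintro _ ⟨b, rfl, m, hm, hmem⟩
    apply monomial_mem_intCl_span_pure_powers ha
    simpa using nsmul_le_weight_of_monomial_smul_mem_pow hw hI hm.ne' hmem
  · rintro _ ⟨i, rfl⟩
    exact ⟨Fin.castLE hdq i, by simp [hv1]⟩

/-- If `I = (x^(v 1), …, x^(v q))` with `v i = a i • e i` for `i ≤ d` and
`⟨v i, α₀⟩ ≥ 1` for all `i`, where `α₀ = (1/a 1, …, 1/a d)`, then
`\overline{I^n} = \overline{(x 1 ^ (a 1), …, x d ^ (a d))^n}` for all `n ≥ 1`. -/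
theorem intCl_eq_intCl_pure_powers {k : Type*} [Field k] (d q : ℕ) (hdq : d ≤ q)
    (a : Fin d → ℕ) (ha : ∀ i, 0 < a i)
    (v : Fin q → (Fin d →₀ ℕ))
    (hv1 : ∀ i : Fin d, v (Fin.castLE hdq i) = Finsupp.single i (a i))
    (hge : ∀ i, (1 : ℚ) ≤ ∑ j, (v i j : ℚ) / (a j : ℚ))
    (n : ℕ) (hn : 1 ≤ n) :
    intCl (Ideal.span (Set.range fun i => monomial (v i) (1 : k))) n =
      intCl (Ideal.span (Set.range fun i : Fin d =>
        monomial (Finsupp.single i (a i)) (1 : k))) n :=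
  intCl_eq_intCl_pure_powers_general d q hdq a ha v hv1 hge n
end

section
/- Let a_1,...,a_d be positive integers, α_0 = (1/a_1,...,1/a_d), S = {x ∈ R^d : x ≥ 0, ⟨x, α_0⟩ ≤ 1}, P = conv(v_1,...,v_s) where v_i = a_i e_i for i ≤ d and ⟨v_i, α_0⟩ < 1 for d < i ≤ s (v_i ∈ N^d), and Q = Q_+^d + P. Then P = S ∩ Q. -/
/-!
Write `ℓ x = ∑ j, x j / a j`. The vertices of `P` lie in the convex set `S`, so `P ⊆ S ∩ Q`.
Conversely, let `x = q + p ∈ S` with `q ≥ 0` and `p ∈ P`, so `p ≤ x` and `ℓ p ≤ ℓ x ≤ 1`.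
Choose `t ∈ [0, 1]` with `t (1 - ℓ p) = 1 - ℓ x`; then
`x = t • p + ∑ k, ((x k - t * p k) / a k) • (a k • e k)`
is a convex combination of `p` and the vertices `a k • e k` of `P`, so `x ∈ P`.
-/

open Pointwise

variable {𝕜 ι : Type*} [Field 𝕜] [LinearOrder 𝕜] [IsStrictOrderedRing 𝕜] [Fintype ι]

theorem convex_setOf_nonneg_sum_div_le_one (a : ι → 𝕜) :
    Convex 𝕜 {x : ι → 𝕜 | (∀ j, 0 ≤ x j) ∧ ∑ j, x j / a j ≤ 1} := by
  have hℓ : IsLinearMap 𝕜 fun x : ι → 𝕜 => ∑ j, x j / a j :=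
    ⟨fun x y => by simp only [Pi.add_apply, add_div, Finset.sum_add_distrib],
      fun c x => by simp only [Pi.smul_apply, smul_eq_mul, mul_div_assoc, Finset.mul_sum]⟩
  exact (convex_Ici (0 : ι → 𝕜)).inter (convex_halfSpace_le hℓ 1)

theorem exists_mem_Icc_mul_one_sub_eq {u v : 𝕜} (huv : u ≤ v) (hv : v ≤ 1) :
    ∃ t ∈ Set.Icc (0 : 𝕜) 1, t * (1 - u) = 1 - v := by
  rcases hv.lt_or_eq with hv | rfl
  · have hu : 0 < 1 - u := by linarith
    exact ⟨(1 - v) / (1 - u), ⟨by bound, by rw [div_le_one hu]; linarith⟩,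
      div_mul_cancel₀ _ hu.ne'⟩
  · exact ⟨0, ⟨le_rfl, zero_le_one⟩, by ring⟩

theorem Convex.mem_of_le_of_sum_div_le_one [DecidableEq ι] {a : ι → 𝕜} {C : Set (ι → 𝕜)}
    {p x : ι → 𝕜} (hC : Convex 𝕜 C) (ha : ∀ j, 0 < a j) (hvert : ∀ j, Pi.single j (a j) ∈ C)
    (hpC : p ∈ C) (hp : 0 ≤ p) (hpx : p ≤ x) (hx : ∑ j, x j / a j ≤ 1) : x ∈ C := by
  have hpx_sum : ∑ j, p j / a j ≤ ∑ j, x j / a j :=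
    Finset.sum_le_sum fun j _ => div_le_div_of_nonneg_right (hpx j) (ha j).le
  obtain ⟨t, ⟨ht0, ht1⟩, ht⟩ := exists_mem_Icc_mul_one_sub_eq hpx_sum hx
  let w : Option ι → 𝕜 := fun o => o.elim t fun k => (x k - t * p k) / a k
  let z : Option ι → ι → 𝕜 := fun o => o.elim p fun k => Pi.single k (a k)
  have hw : ∀ o ∈ Finset.univ, 0 ≤ w o := by
    rintro (_ | k) -
    · exact ht0
    · have : t * p k ≤ x k := (mul_le_of_le_one_left (hp k) ht1).trans (hpx k)
      exact div_nonneg (by linarith) (ha k).le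
  have hw1 : ∑ o, w o = 1 := by
    simp only [w, Fintype.sum_option, Option.elim, sub_div, Finset.sum_sub_distrib,
      mul_div_assoc, ← Finset.mul_sum]
    linear_combination ht
  have hwz : ∑ o, w o • z o = x := by
    ext j
    simp [w, z, Fintype.sum_option, Finset.sum_apply, Pi.single_apply, (ha j).ne']
  exact hwz ▸ hC.sum_mem hw hw1 fun o _ => o.rec hpC hvert

/-- With `v i = a i • e i` for `i ≤ d` (the `a i` positive integers),
`v i ∈ ℕ^d` with `⟨v i, α₀⟩ < 1` for `d < i ≤ s`, where `α₀ = (1/a 1, …, 1/a d)`,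
`P = conv(v 1, …, v s)`, `S = {x : x ≥ 0, ⟨x, α₀⟩ ≤ 1}` and `Q = ℚ₊^d + P`,
one has `P = S ∩ Q`. -/
theorem polytope_eq_simplex_inter_polyhedron (d s : ℕ) (hds : d ≤ s)
    (a : Fin d → ℕ) (ha : ∀ i, 0 < a i)
    (v : Fin s → (Fin d → ℚ))
    (hv1 : ∀ i : Fin d, v (Fin.castLE hds i) = Pi.single i (a i : ℚ))
    (hvnat : ∀ i j, ∃ m : ℕ, v i j = (m : ℚ))
    (hlt : ∀ i : Fin s, d ≤ (i : ℕ) → ∑ j, v i j / (a j : ℚ) < 1) :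
    convexHull ℚ (Set.range v) =
      {x : Fin d → ℚ | (∀ j, 0 ≤ x j) ∧ ∑ j, x j / (a j : ℚ) ≤ 1} ∩
        ({x : Fin d → ℚ | ∀ j, 0 ≤ x j} + convexHull ℚ (Set.range v)) := by
  have haQ : ∀ j, (0 : ℚ) < a j := fun j => by exact_mod_cast ha j
  have hvS : ∀ i, (∀ j, 0 ≤ v i j) ∧ ∑ j, v i j / (a j : ℚ) ≤ 1 := by
    refine fun i => ⟨fun j => ?_, ?_⟩
    · obtain ⟨m, hm⟩ := hvnat i j
      exact hm ▸ m.cast_nonneg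
    · rcases lt_or_ge (i : ℕ) d with hi | hi
      · rw [← show Fin.castLE hds ⟨i, hi⟩ = i from rfl, hv1]
        simp [Pi.single_apply, ite_div, (haQ _).ne']
      · exact (hlt i hi).le
  have hPS := convexHull_min (Set.range_subset_iff.2 hvS)
    (convex_setOf_nonneg_sum_div_le_one fun j => (a j : ℚ))
  have hPQ : convexHull ℚ (Set.range v) ⊆
      {x : Fin d → ℚ | ∀ j, 0 ≤ x j} + convexHull ℚ (Set.range v) :=
    fun x hx => ⟨0, fun _ => le_rfl, x, hx, zero_add x⟩
  refine (Set.subset_inter hPS hPQ).antisymm ?_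
  rintro _ ⟨hxS, q, hq, p, hp, rfl⟩
  exact (convex_convexHull ℚ _).mem_of_le_of_sum_div_le_one haQ
    (fun j => subset_convexHull ℚ _ ⟨_, hv1 j⟩) hp (hPS hp).1 (le_add_of_nonneg_left hq) hxS.2
end

section
/- With P = conv(v_1,...,v_s) as above (v_i = a_ie_i for i ≤ d, ⟨v_i, α_0⟩ < 1 for i > d), let α ∈ ∂P \ conv(v_1,...,v_d) with α_i > 0 for all i = 1,...,d. Then the vector α' = (α_1,...,α_{d-1},0) does not belong to P. -/
/-!
The functional `⟨·, a⁻¹⟩` is at most `1` on `P`, and a point of `P` where it equals `1` is a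
convex combination of vertices where it equals `1`, i.e. of the `a i • e i`; hence `⟨α, a⁻¹⟩ < 1`.
Truncating the last coordinate strictly lowers the functional, and then `α` has positive
barycentric coordinates in the simplex spanned by `α'` and the `a i • e i`. So if `α' ∈ P`, then
`α` is an interior point of `P`, which contradicts `α ∈ ∂P`.
-/

open Finset Matrix

theorem mem_convexHull_sep_of_apply_eq {𝕜 E : Type*} [Field 𝕜] [LinearOrder 𝕜]
    [IsStrictOrderedRing 𝕜] [AddCommGroup E] [Module 𝕜 E] {s : Set E} {l : E →ₗ[𝕜] 𝕜} {c : 𝕜}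
    {x : E} (hs : ∀ y ∈ s, l y ≤ c) (hx : x ∈ convexHull 𝕜 s) (hlx : l x = c) :
    x ∈ convexHull 𝕜 {y ∈ s | l y = c} := by
  classical
  obtain ⟨ι, t, w, z, hw₀, hw₁, hz, rfl⟩ := (convexHull_eq s).subset hx
  have hslack : ∑ i ∈ t, w i * (c - l (z i)) = 0 := by
    rw [t.centerMass_eq_of_sum_1 _ hw₁, map_sum] at hlx
    simp only [map_smul, smul_eq_mul] at hlx
    simp only [mul_sub, sum_sub_distrib, ← sum_mul, hw₁, hlx]
    ring
  have hface : ∀ i ∈ t, w i ≠ 0 → l (z i) = c := fun i hi hwi ↦ by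
    have := (sum_eq_zero_iff_of_nonneg fun j hj ↦
      mul_nonneg (hw₀ j hj) (sub_nonneg.2 (hs _ (hz j hj)))).1 hslack i hi
    exact (sub_eq_zero.1 ((mul_eq_zero.1 this).resolve_left hwi)).symm
  rw [← t.centerMass_filter_ne_zero]
  refine centerMass_mem_convexHull _ (fun i hi ↦ hw₀ i (mem_filter.1 hi).1) ?_ fun i hi ↦ ?_
  · rw [sum_filter_ne_zero, hw₁]
    exact one_pos
  · obtain ⟨hit, hwi⟩ := mem_filter.1 hi
    exact ⟨hz i hit, hface i hit hwi⟩

theorem apply_lt_of_mem_convexHull_of_notMem_convexHull {𝕜 E : Type*} [Field 𝕜] [LinearOrder 𝕜]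
    [IsStrictOrderedRing 𝕜] [AddCommGroup E] [Module 𝕜 E] {s T : Set E} {l : E →ₗ[𝕜] 𝕜} {c : 𝕜}
    {x : E} (hs : ∀ y ∈ s, l y ≤ c) (hT : ∀ y ∈ s, l y = c → y ∈ T) (hx : x ∈ convexHull 𝕜 s)
    (hxT : x ∉ convexHull 𝕜 T) : l x < c :=
  lt_of_le_of_ne (convexHull_min hs (convex_halfSpace_le l.isLinear c) hx) fun h ↦
    hxT (convexHull_mono (fun y hy ↦ hT y hy.1 hy.2) (mem_convexHull_sep_of_apply_eq hs hx h))

theorem Convex.smul_add_sum_smul_mem {𝕜 E ι : Type*} [Field 𝕜] [LinearOrder 𝕜]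
    [IsStrictOrderedRing 𝕜] [AddCommGroup E] [Module 𝕜 E] {P : Set E} (hP : Convex 𝕜 P)
    {t : Finset ι} {g : 𝕜} {c : ι → 𝕜} {z : E} {b : ι → E} (hg : 0 ≤ g) (hc : ∀ i ∈ t, 0 ≤ c i)
    (hsum : g + ∑ i ∈ t, c i = 1) (hz : z ∈ P) (hb : ∀ i ∈ t, b i ∈ P) :
    g • z + ∑ i ∈ t, c i • b i ∈ P := by
  have := hP.sum_mem (t := t.insertNone) (w := fun o ↦ o.elim g c) (z := fun o ↦ o.elim z b)
    (by rintro (_ | i) hi; exacts [hg, hc i (by simpa using hi)])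
    (by simpa [sum_insertNone] using hsum)
    (by rintro (_ | i) hi; exacts [hz, hb i (by simpa using hi)])
  simpa [sum_insertNone] using this

section SimplexCoordinates

variable {ι : Type*} [Fintype ι] (a z x : ι → ℝ)

/-- `simplexApexCoord` and `simplexBaseCoord j` are the barycentric coordinates `g`, `c j` of `x` in
the simplex `conv(z, a 1 • e 1, …, a d • e d)`: `x = g • z + ∑ j, c j • a j • e j` with
`g + ∑ j, c j = 1`, provided `⟨z, a⁻¹⟩ ≠ 1`. -/
noncomputable def simplexApexCoord : ℝ := (1 - a⁻¹ ⬝ᵥ x) / (1 - a⁻¹ ⬝ᵥ z)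

noncomputable def simplexBaseCoord (j : ι) : ℝ :=
  (x j - simplexApexCoord a z x * z j) / a j

theorem simplexApexCoord_add_sum_simplexBaseCoord (hz : a⁻¹ ⬝ᵥ z ≠ 1) :
    simplexApexCoord a z x + ∑ j, simplexBaseCoord a z x j = 1 := by
  set g := simplexApexCoord a z x
  have hsum : ∑ j, simplexBaseCoord a z x j = a⁻¹ ⬝ᵥ x - g * (a⁻¹ ⬝ᵥ z) := by
    simp only [simplexBaseCoord, dotProduct, Pi.inv_apply, mul_sum, ← sum_sub_distrib]
    exact sum_congr rfl fun j _ ↦ by ring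
  have hg : g * (1 - a⁻¹ ⬝ᵥ z) = 1 - a⁻¹ ⬝ᵥ x := div_mul_cancel₀ _ (sub_ne_zero.2 hz.symm)
  linear_combination hsum + hg

theorem simplexApexCoord_smul_add_sum_simplexBaseCoord_smul [DecidableEq ι]
    (ha : ∀ j, a j ≠ 0) :
    simplexApexCoord a z x • z + ∑ j, simplexBaseCoord a z x j • Pi.single j (a j) = x := by
  ext i
  simp [Finset.sum_apply, Pi.single_apply, simplexBaseCoord, div_mul_cancel₀ _ (ha i)]

theorem continuous_simplexApexCoord : Continuous (simplexApexCoord a z) := by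
  unfold simplexApexCoord
  fun_prop

theorem continuous_simplexBaseCoord (j : ι) : Continuous fun x ↦ simplexBaseCoord a z x j := by
  unfold simplexBaseCoord
  have := continuous_simplexApexCoord a z
  fun_prop

variable {a z x} [DecidableEq ι] {P : Set (ι → ℝ)}

theorem mem_interior_of_simplexCoord_pos (hP : Convex ℝ P) (hzP : z ∈ P)
    (hvert : ∀ j, Pi.single j (a j) ∈ P) (ha : ∀ j, a j ≠ 0) (hz : a⁻¹ ⬝ᵥ z ≠ 1)
    (hg : 0 < simplexApexCoord a z x) (hc : ∀ j, 0 < simplexBaseCoord a z x j) :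
    x ∈ interior P := by
  set U := {y | 0 < simplexApexCoord a z y} ∩ ⋂ j, {y | 0 < simplexBaseCoord a z y j}
  have hUopen : IsOpen U :=
    (isOpen_lt continuous_const (continuous_simplexApexCoord a z)).inter <|
      isOpen_iInter_of_finite fun j ↦ isOpen_lt continuous_const (continuous_simplexBaseCoord a z j)
  have hUP : U ⊆ P := fun y ⟨hgy, hcy⟩ ↦ by
    rw [← simplexApexCoord_smul_add_sum_simplexBaseCoord_smul a z y ha]
    exact hP.smul_add_sum_smul_mem hgy.le (fun j _ ↦ (Set.mem_iInter.1 hcy j).le)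
      (simplexApexCoord_add_sum_simplexBaseCoord a z y hz) hzP fun j _ ↦ hvert j
  exact mem_interior.2 ⟨U, hUP, hUopen, hg, Set.mem_iInter.2 hc⟩

/-- `x` lies strictly inside the simplex `conv(z, a 1 • e 1, …, a d • e d) ⊆ P`. -/
theorem mem_interior_of_le_of_dotProduct_lt (hP : Convex ℝ P) (hzP : z ∈ P)
    (hvert : ∀ j, Pi.single j (a j) ∈ P) (ha : ∀ j, 0 < a j) (hzx : z ≤ x) (hx : ∀ j, 0 < x j)
    (hzx' : a⁻¹ ⬝ᵥ z < a⁻¹ ⬝ᵥ x) (hx1 : a⁻¹ ⬝ᵥ x < 1) : x ∈ interior P := by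
  have hg : 0 < simplexApexCoord a z x := div_pos (sub_pos.2 hx1) (sub_pos.2 (hzx'.trans hx1))
  have hg1 : simplexApexCoord a z x < 1 := (div_lt_one (sub_pos.2 (hzx'.trans hx1))).2 (by linarith)
  refine mem_interior_of_simplexCoord_pos hP hzP hvert (fun j ↦ (ha j).ne') (hzx'.trans hx1).ne hg
    fun j ↦ div_pos ?_ (ha j)
  nlinarith [hzx j, hx j]

end SimplexCoordinates

theorem inv_dotProduct_update_zero_lt {ι : Type*} [Fintype ι] [DecidableEq ι] {a x : ι → ℝ}
    {k : ι} (ha : 0 < a k) (hx : 0 < x k) : a⁻¹ ⬝ᵥ Function.update x k 0 < a⁻¹ ⬝ᵥ x := by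
  have hx_eq : x = Function.update x k 0 + Pi.single k (x k) := by
    ext j
    rcases eq_or_ne j k with rfl | hj <;> simp [*]
  calc a⁻¹ ⬝ᵥ Function.update x k 0 < a⁻¹ ⬝ᵥ Function.update x k 0 + a⁻¹ k * x k :=
        lt_add_of_pos_right _ (mul_pos (inv_pos.2 ha) hx)
    _ = a⁻¹ ⬝ᵥ x := by rw [hx_eq, dotProduct_add, dotProduct_single, ← hx_eq]

theorem inv_dotProduct_lt_one_of_mem_convexHull {d s : ℕ} (hds : d ≤ s) {A : Fin d → ℝ}
    (hA : ∀ j, A j ≠ 0) {v : Fin s → Fin d → ℝ}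
    (hv1 : ∀ i : Fin d, v (Fin.castLE hds i) = Pi.single i (A i))
    (hvlt : ∀ i : Fin s, d ≤ (i : ℕ) → A⁻¹ ⬝ᵥ v i < 1) {x : Fin d → ℝ}
    (hx : x ∈ convexHull ℝ (Set.range v))
    (hxH : x ∉ convexHull ℝ (Set.range fun i : Fin d ↦ v (Fin.castLE hds i))) :
    A⁻¹ ⬝ᵥ x < 1 := by
  have hle : ∀ y ∈ Set.range v, A⁻¹ ⬝ᵥ y ≤ 1 := by
    rintro _ ⟨i, rfl⟩
    by_cases hi : (i : ℕ) < d
    · rw [show v i = Pi.single _ (A _) from hv1 ⟨i, hi⟩, dotProduct_single, Pi.inv_apply,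
        inv_mul_cancel₀ (hA _)]
    · exact (hvlt i (not_lt.1 hi)).le
  have hface : ∀ y ∈ Set.range v, A⁻¹ ⬝ᵥ y = 1 →
      y ∈ Set.range fun i : Fin d ↦ v (Fin.castLE hds i) := by
    rintro _ ⟨i, rfl⟩ h
    exact ⟨⟨i, not_le.1 fun hi ↦ (hvlt i hi).ne h⟩, rfl⟩
  exact apply_lt_of_mem_convexHull_of_notMem_convexHull (l := dotProductEquiv ℝ (Fin d) A⁻¹)
    hle hface hx hxH

/-- With `P = conv(v 1, …, v s)` (`v i = a i • e i` for `i ≤ d`, and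
`⟨v i, α₀⟩ < 1` with `v i ∈ ℕ^d` for `i > d`), if `α` lies in the relative
boundary of `P`, not in `conv(v 1, …, v d)`, and has all coordinates positive,
then `α' = (α 1, …, α (d-1), 0)` does not belong to `P`. -/
theorem truncation_not_mem_polytope (d s : ℕ) (hd : 0 < d) (hds : d ≤ s)
    (a : Fin d → ℕ) (ha : ∀ i, 0 < a i)
    (v : Fin s → (Fin d → ℝ))
    (hv1 : ∀ i : Fin d, v (Fin.castLE hds i) = Pi.single i (a i : ℝ))
    (hlt : ∀ i : Fin s, d ≤ (i : ℕ) → ∑ j, v i j / (a j : ℝ) < 1)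
    (α : Fin d → ℝ)
    (hαP : α ∈ intrinsicFrontier ℝ (convexHull ℝ (Set.range v)))
    (hαH : α ∉ convexHull ℝ (Set.range fun i : Fin d => v (Fin.castLE hds i)))
    (hpos : ∀ i, 0 < α i) :
    Function.update α ⟨d - 1, by omega⟩ 0 ∉ convexHull ℝ (Set.range v) := by
  intro hmem
  set A : Fin d → ℝ := fun j ↦ (a j : ℝ)
  have hA : ∀ j, 0 < A j := fun j ↦ Nat.cast_pos.2 (ha j)
  have hvlt : ∀ i : Fin s, d ≤ (i : ℕ) → A⁻¹ ⬝ᵥ v i < 1 := fun i hi ↦ by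
    simpa only [dotProduct, Pi.inv_apply, div_eq_inv_mul] using hlt i hi
  have hαP' : α ∈ convexHull ℝ (Set.range v) := intrinsicFrontier_subset
    ((Set.finite_range v).isCompact_convexHull (𝕜 := ℝ)).isClosed hαP
  have hα1 : A⁻¹ ⬝ᵥ α < 1 :=
    inv_dotProduct_lt_one_of_mem_convexHull hds (fun j ↦ (hA j).ne') hv1 hvlt hαP' hαH
  have hvert : ∀ j, Pi.single j (A j) ∈ convexHull ℝ (Set.range v) :=
    fun j ↦ hv1 j ▸ subset_convexHull ℝ _ ⟨_, rfl⟩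
  have hαint : α ∈ interior (convexHull ℝ (Set.range v)) :=
    mem_interior_of_le_of_dotProduct_lt (convex_convexHull ℝ _) hmem hvert hA
      (update_le_iff.2 ⟨(hpos _).le, fun _ _ ↦ le_rfl⟩) hpos
      (inv_dotProduct_update_zero_lt (hA _) (hpos _)) hα1
  exact (intrinsicFrontier_subset_frontier hαP).2 hαint
end

section
/- With the above notation, for i = 1,...,d one has ∂P ∩ K_i = P_i, where P_i = conv({v_j : 1 ≤ j ≤ s, the i-th coordinate of v_j is 0}) and K_i = {x ∈ S : x_i = 0}. -/
/-
All vertices have nonnegative coordinates, so the hyperplane `x i = 0` supports `P`: it cuts out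
of `P` exactly the hull of the vertices lying on it, and since the vertex `a i • e i` lies strictly
on the positive side, none of these points is in the relative interior of `P`. The condition
`⟨v j, α₀⟩ < 1` puts every vertex, hence all of `P`, inside the simplex `S`, so intersecting
with `S` changes nothing.
-/

open Set

section
variable {𝕜 E : Type*} [Field 𝕜] [LinearOrder 𝕜] [IsStrictOrderedRing 𝕜] [AddCommGroup E]
  [Module 𝕜 E]

theorem convexHull_inter_setOf_eq_zero_of_nonneg (f : E →ₗ[𝕜] 𝕜) {A : Set E}
    (hA : ∀ x ∈ A, 0 ≤ f x) :
    convexHull 𝕜 A ∩ {x | f x = 0} = convexHull 𝕜 {x ∈ A | f x = 0} := by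
  refine Subset.antisymm ?_ (subset_inter (convexHull_mono (sep_subset _ _))
    (convexHull_min (fun x hx => hx.2) (convex_hyperplane f.isLinear 0)))
  -- This set is convex: a proper convex combination lies on `{f = 0}` only if both endpoints do.
  suffices convexHull 𝕜 A ⊆
      {x | 0 ≤ f x ∧ (f x = 0 → x ∈ convexHull 𝕜 {x ∈ A | f x = 0})} from
    fun x ⟨hx, hx0⟩ => (this hx).2 hx0
  refine convexHull_min (fun x hx => ⟨hA x hx, fun h => subset_convexHull 𝕜 _ ⟨hx, h⟩⟩) ?_
  rintro x ⟨hx0, hx⟩ y ⟨hy0, hy⟩ α β hα hβ hαβ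
  simp only [mem_ofPred_eq, map_add, map_smul, smul_eq_mul]
  refine ⟨by positivity, fun h => ?_⟩
  rcases hα.eq_or_lt with rfl | hα
  · obtain rfl : β = 1 := by simpa using hαβ
    simpa using hy (by simpa using h)
  rcases hβ.eq_or_lt with rfl | hβ
  · obtain rfl : α = 1 := by simpa using hαβ
    simpa using hx (by simpa using h)
  exact convex_convexHull 𝕜 _ (hx (by nlinarith)) (hy (by nlinarith)) hα.le hβ.le hαβ

end

section
variable {E : Type*} [NormedAddCommGroup E] [NormedSpace ℝ E] {C : Set E} {x y : E}

theorem eventually_lineMap_mem_of_mem_intrinsicInterior (hx : x ∈ intrinsicInterior ℝ C)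
    (hy : y ∈ affineSpan ℝ C) : ∀ᶠ t in nhds (0 : ℝ), AffineMap.lineMap x y t ∈ C := by
  obtain ⟨p, hp, rfl⟩ := mem_intrinsicInterior.1 hx
  let γ : ℝ → affineSpan ℝ C := fun t =>
    ⟨AffineMap.lineMap (p : E) y t, AffineMap.lineMap_mem _ p.2 hy⟩
  have hγ : Continuous γ := by
    apply Continuous.subtype_mk
    fun_prop
  have : γ ⁻¹' interior ((↑) ⁻¹' C) ∈ nhds 0 :=
    hγ.continuousAt.preimage_mem_nhds (by simpa [γ] using isOpen_interior.mem_nhds hp)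
  filter_upwards [this] with t ht using interior_subset (s := ((↑) : affineSpan ℝ C → E) ⁻¹' C) ht

theorem IsMinOn.notMem_intrinsicInterior {f : E →ₗ[ℝ] ℝ} (hmin : IsMinOn f C x) (hy : y ∈ C)
    (hlt : f x < f y) : x ∉ intrinsicInterior ℝ C := by
  intro hx
  obtain ⟨t, htC, ht⟩ := ((eventually_nhdsWithin_of_eventually_nhds
    (eventually_lineMap_mem_of_mem_intrinsicInterior hx (subset_affineSpan ℝ C hy))).and
    (self_mem_nhdsWithin (s := Iio 0))).exists
  have := hmin htC
  simp only [mem_ofPred_eq, AffineMap.lineMap_apply_module, map_add, map_smul, smul_eq_mul] at this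
  nlinarith [show t < 0 from ht]

end

theorem mem_convexHull_insert_zero_range_single {ι : Type*} [Fintype ι] [DecidableEq ι]
    {a : ι → ℝ} (ha : ∀ k, 0 < a k) {x : ι → ℝ} (hx : ∀ k, 0 ≤ x k)
    (hsum : ∑ k, x k / a k ≤ 1) :
    x ∈ convexHull ℝ (insert 0 (range fun k => Pi.single k (a k))) := by
  let w : Option ι → ℝ := fun o => o.elim (1 - ∑ k, x k / a k) fun k => x k / a k
  let z : Option ι → ι → ℝ := fun o => o.elim 0 fun k => Pi.single k (a k)
  have hx_eq : ∑ o, w o • z o = x := by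
    ext m
    simp [w, z, Fintype.sum_option, Finset.sum_apply, Pi.single_apply, (ha m).ne']
  rw [← hx_eq]
  refine (convex_convexHull ℝ _).sum_mem (fun o _ => ?_) ?_ (fun o _ => ?_)
  · cases o with
    | none => simpa [w] using hsum
    | some k => exact div_nonneg (hx k) (ha k).le
  · simp [w, Fintype.sum_option]
  · cases o with
    | none => exact subset_convexHull ℝ _ (mem_insert _ _)
    | some k => exact subset_convexHull ℝ _ (mem_insert_of_mem _ ⟨k, rfl⟩)

theorem convexHull_range_subset_convexHull_insert_zero {d s : ℕ} (hds : d ≤ s) {a : Fin d → ℕ}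
    (ha : ∀ i, 0 < a i) {v : Fin s → Fin d → ℝ}
    (hv1 : ∀ i : Fin d, v (Fin.castLE hds i) = Pi.single i (a i : ℝ))
    (hv_nonneg : ∀ j k, 0 ≤ v j k) (hlt : ∀ j : Fin s, d ≤ (j : ℕ) → ∑ k, v j k / (a k : ℝ) < 1) :
    convexHull ℝ (range v) ⊆ convexHull ℝ (insert 0 (range fun k => v (Fin.castLE hds k))) := by
  refine convexHull_min ?_ (convex_convexHull ℝ _)
  rintro _ ⟨j, rfl⟩
  rcases lt_or_ge (j : ℕ) d with hj | hj
  · exact subset_convexHull ℝ _ (mem_insert_of_mem _ ⟨⟨j, hj⟩, rfl⟩)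
  · rw [funext hv1]
    exact mem_convexHull_insert_zero_range_single (fun k => Nat.cast_pos.2 (ha k))
      (hv_nonneg j) (hlt j hj).le

theorem boundary_inter_face_general (d s : ℕ) (hds : d ≤ s)
    (a : Fin d → ℕ) (ha : ∀ i, 0 < a i)
    (v : Fin s → (Fin d → ℝ))
    (hv1 : ∀ i : Fin d, v (Fin.castLE hds i) = Pi.single i (a i : ℝ))
    (hvnat : ∀ i j, ∃ m : ℕ, v i j = (m : ℝ))
    (hlt : ∀ i : Fin s, d ≤ (i : ℕ) → ∑ j, v i j / (a j : ℝ) < 1)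
    (i : Fin d) :
    intrinsicFrontier ℝ (convexHull ℝ (Set.range v)) ∩
        {x ∈ convexHull ℝ
          (insert 0 (Set.range fun i : Fin d => v (Fin.castLE hds i))) | x i = 0} =
      convexHull ℝ {x | (∃ j, v j = x) ∧ x i = 0} := by
  set P := convexHull ℝ (range v)
  have hv_nonneg : ∀ j k, 0 ≤ v j k := fun j k => by
    obtain ⟨m, hm⟩ := hvnat j k
    exact hm ▸ m.cast_nonneg
  have hP_nonneg : ∀ x ∈ P, 0 ≤ x i :=
    convexHull_min (by rintro _ ⟨j, rfl⟩; exact hv_nonneg j i)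
      (convex_halfSpace_ge (LinearMap.proj i : (Fin d → ℝ) →ₗ[ℝ] ℝ).isLinear 0)
  have hface : P ∩ {x | x i = 0} = convexHull ℝ {x | (∃ j, v j = x) ∧ x i = 0} :=
    convexHull_inter_setOf_eq_zero_of_nonneg (LinearMap.proj i) (A := range v)
      (by rintro _ ⟨j, rfl⟩; exact hv_nonneg j i)
  have hP_closed : IsClosed P := ((finite_range v).isCompact_convexHull (𝕜 := ℝ)).isClosed
  ext x
  rw [← hface]
  constructor
  · rintro ⟨hxF, -, hxi⟩
    exact ⟨intrinsicFrontier_subset hP_closed hxF, hxi⟩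
  · rintro ⟨hxP, hxi : x i = 0⟩
    have hx_notMem : x ∉ intrinsicInterior ℝ P :=
      IsMinOn.notMem_intrinsicInterior (f := LinearMap.proj i)
        (fun z hz => hxi.trans_le (hP_nonneg z hz))
        (subset_convexHull ℝ _ ⟨Fin.castLE hds i, rfl⟩) (by simp [hv1, hxi, ha i])
    refine ⟨?_, convexHull_range_subset_convexHull_insert_zero hds ha hv1 hv_nonneg hlt hxP, hxi⟩
    rw [← closure_sdiff_intrinsicInterior]
    exact ⟨subset_closure hxP, hx_notMem⟩

/-- With `P = conv(v 1, …, v s)`, `S = conv(0, v 1, …, v d)` (`v i = a i • e i` for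
`i ≤ d`, and `⟨v i, α₀⟩ < 1`, `v i ∈ ℕ^d` for `i > d`), for each `i` one has
`∂P ∩ K i = P i`, where `K i = {x ∈ S : x i = 0}` and
`P i = conv({v j : the i-th coordinate of v j is 0})`. -/
theorem boundary_inter_face (d s : ℕ) (hd : 0 < d) (hds : d ≤ s)
    (a : Fin d → ℕ) (ha : ∀ i, 0 < a i)
    (v : Fin s → (Fin d → ℝ))
    (hv1 : ∀ i : Fin d, v (Fin.castLE hds i) = Pi.single i (a i : ℝ))
    (hvnat : ∀ i j, ∃ m : ℕ, v i j = (m : ℝ))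
    (hlt : ∀ i : Fin s, d ≤ (i : ℕ) → ∑ j, v i j / (a j : ℝ) < 1)
    (i : Fin d) :
    intrinsicFrontier ℝ (convexHull ℝ (Set.range v)) ∩
        {x ∈ convexHull ℝ
          (insert 0 (Set.range fun i : Fin d => v (Fin.castLE hds i))) | x i = 0} =
      convexHull ℝ {x | (∃ j, v j = x) ∧ x i = 0} :=
  boundary_inter_face_general d s hds a ha v hv1 hvnat hlt i
end
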